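/- arXiv:1405.5118 — 11 statements merged into one kernel-verified Lean document; each statement's English description precedes it below -/
import Mathlib

section
/- Let U ⊆ ℝⁿ be open and l₁,…,lₙ : U → ℝ smooth functions, and let L : U → (ℝⁿ →L[ℝ] ℝⁿ) be the diagonal field of operators defined by L(x)eᵢ = lᵢ(x)eᵢ for the standard basis (e₁,…,eₙ). Then the Haantjes tensor of L vanishes identically: H_L(X,Y)(x) = 0 for all smooth vector fields X, Y : U → ℝⁿ and all x ∈ U. (Paper: Proposition 2.5, 'if there exists a local chart in which L assumes diagonal form, then the Haantjes tensor of L vanishes'.) -/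
variable {E : Type*} [NormedAddCommGroup E] [NormedSpace ℝ E]

/-- Lie bracket of vector fields on a normed space:
`[X,Y](x) = (fderiv Y x)(X x) − (fderiv X x)(Y x)`. -/
noncomputable def lieBracket (X Y : E → E) : E → E :=
  fun x => fderiv ℝ Y x (X x) - fderiv ℝ X x (Y x)

/-- The vector field `LX : x ↦ L(x)(X(x))`. -/
noncomputable def opVec (L : E → (E →L[ℝ] E)) (X : E → E) : E → E :=
  fun x => L x (X x)

/-- Nijenhuis torsion of a field of operators:
`T_L(X,Y) = L²[X,Y] + [LX,LY] − L([X,LY] + [LX,Y])`. -/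
noncomputable def nijenhuisTorsion (L : E → (E →L[ℝ] E)) (X Y : E → E) : E → E :=
  fun x =>
    L x (L x (lieBracket X Y x)) + lieBracket (opVec L X) (opVec L Y) x
      - L x (lieBracket X (opVec L Y) x + lieBracket (opVec L X) Y x)

/-- Haantjes tensor of a field of operators:
`H_L(X,Y) = L²T_L(X,Y) + T_L(LX,LY) − L(T_L(X,LY) + T_L(LX,Y))`. -/
noncomputable def haantjesTensor (L : E → (E →L[ℝ] E)) (X Y : E → E) : E → E :=
  fun x =>
    L x (L x (nijenhuisTorsion L X Y x)) + nijenhuisTorsion L (opVec L X) (opVec L Y) x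
      - L x (nijenhuisTorsion L X (opVec L Y) x + nijenhuisTorsion L (opVec L X) Y x)

/-! In coordinates where `L = diag(l₁, …, lₙ)`, the `k`-th component of the Nijenhuis torsion is
`T(Z, W)ₖ = Wₖ βₖ(Z) − Zₖ βₖ(W)` with `βₖ(u) = dlₖ((L − lₖ)u)`, a bilinear expression in the values
of `Z` and `W`. Expanding by bilinearity, `H(X, Y)ₖ = Tₖ((L − lₖ)X, (L − lₖ)Y)`, which vanishes
because `(L − lₖ)u` has zero `k`-th component. -/

open Topology

theorem LinearMap.apply_apply_of_apply_single {ι R : Type*} [Fintype ι] [DecidableEq ι]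
    [CommSemiring R] {f : (ι → R) →ₗ[R] (ι → R)} {c : ι → R}
    (hf : ∀ i, f (Pi.single i 1) = c i • Pi.single i 1) (v : ι → R) (k : ι) :
    f v k = c k * v k := by
  have hv : ∀ i, Pi.single i (v i) = v i • (Pi.single i 1 : ι → R) := fun i => by
    rw [← Pi.single_smul, smul_eq_mul, mul_one]
  rw [← Finset.univ_sum_single v, map_sum]
  simp [hv, hf, Finset.sum_apply, Pi.single_apply, mul_comm]

section Diagonal

variable {ι : Type*} [Fintype ι] {L : (ι → ℝ) → (ι → ℝ) →L[ℝ] (ι → ℝ)}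
  {l : ι → (ι → ℝ) → ℝ} {x : ι → ℝ}

theorem hasFDerivAt_pi_mul {Z : (ι → ℝ) → ι → ℝ} {l' : ι → (ι → ℝ) →L[ℝ] ℝ}
    {Z' : (ι → ℝ) →L[ℝ] (ι → ℝ)} (hl : ∀ k, HasFDerivAt (l k) (l' k) x)
    (hZ : HasFDerivAt Z Z' x) :
    HasFDerivAt (fun z k => l k z * Z z k)
      (ContinuousLinearMap.pi fun k =>
        l k x • (ContinuousLinearMap.proj k).comp Z' + Z x k • l' k) x :=
  hasFDerivAt_pi'.mpr fun k => (hl k).mul (hasFDerivAt_pi'.mp hZ k)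

theorem opVec_eventuallyEq_of_diagonal (hL : ∀ᶠ z in 𝓝 x, ∀ v k, L z v k = l k z * v k)
    (Z : (ι → ℝ) → ι → ℝ) :
    opVec L Z =ᶠ[𝓝 x] fun z k => l k z * Z z k :=
  hL.mono fun z hz => funext fun k => hz (Z z) k

theorem differentiableAt_opVec_of_diagonal (hL : ∀ᶠ z in 𝓝 x, ∀ v k, L z v k = l k z * v k)
    (hl : ∀ k, DifferentiableAt ℝ (l k) x) {Z : (ι → ℝ) → ι → ℝ}
    (hZ : DifferentiableAt ℝ Z x) : DifferentiableAt ℝ (opVec L Z) x :=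
  (hasFDerivAt_pi_mul (fun k => (hl k).hasFDerivAt) hZ.hasFDerivAt).differentiableAt
    |>.congr_of_eventuallyEq (opVec_eventuallyEq_of_diagonal hL Z)

theorem fderiv_opVec_apply_of_diagonal (hL : ∀ᶠ z in 𝓝 x, ∀ v k, L z v k = l k z * v k)
    (hl : ∀ k, DifferentiableAt ℝ (l k) x) {Z : (ι → ℝ) → ι → ℝ}
    (hZ : DifferentiableAt ℝ Z x) (v : ι → ℝ) (k : ι) :
    fderiv ℝ (opVec L Z) x v k = l k x * fderiv ℝ Z x v k + Z x k * fderiv ℝ (l k) x v := by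
  rw [(opVec_eventuallyEq_of_diagonal hL Z).fderiv_eq,
    (hasFDerivAt_pi_mul (fun k => (hl k).hasFDerivAt) hZ.hasFDerivAt).fderiv]
  simp

theorem nijenhuisTorsion_apply_of_diagonal
    (hL : ∀ᶠ z in 𝓝 x, ∀ v k, L z v k = l k z * v k)
    (hl : ∀ k, DifferentiableAt ℝ (l k) x) {Z W : (ι → ℝ) → ι → ℝ}
    (hZ : DifferentiableAt ℝ Z x) (hW : DifferentiableAt ℝ W x) (k : ι) :
    nijenhuisTorsion L Z W x k =
      W x k * (fderiv ℝ (l k) x (L x (Z x)) - l k x * fderiv ℝ (l k) x (Z x))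
      - Z x k * (fderiv ℝ (l k) x (L x (W x)) - l k x * fderiv ℝ (l k) x (W x)) := by
  have hLx : ∀ v k, L x v k = l k x * v k := hL.self_of_nhds
  simp only [nijenhuisTorsion, lieBracket, opVec, Pi.add_apply, Pi.sub_apply, hLx,
    fderiv_opVec_apply_of_diagonal hL hl hZ, fderiv_opVec_apply_of_diagonal hL hl hW]
  ring

end Diagonal

/-- Paper, Proposition 2.5: if `L` is a diagonal field of operators
`L(x)eᵢ = lᵢ(x)eᵢ` on an open set `U ⊆ ℝⁿ` with smooth eigenvalue functions `lᵢ`,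
then its Haantjes tensor vanishes identically on `U`. -/
theorem haantjes_of_diagonal {n : ℕ} (U : Set (Fin n → ℝ)) (hU : IsOpen U)
    (l : Fin n → (Fin n → ℝ) → ℝ) (hl : ∀ i, ContDiffOn ℝ (⊤ : ℕ∞) (l i) U)
    (L : (Fin n → ℝ) → ((Fin n → ℝ) →L[ℝ] (Fin n → ℝ)))
    (hLdiag : ∀ x ∈ U, ∀ i,
      L x (Pi.single i 1) = l i x • (Pi.single i 1 : Fin n → ℝ))
    (X Y : (Fin n → ℝ) → (Fin n → ℝ))
    (hX : ContDiffOn ℝ (⊤ : ℕ∞) X U) (hY : ContDiffOn ℝ (⊤ : ℕ∞) Y U) :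
    ∀ x ∈ U, haantjesTensor L X Y x = 0 := by
  intro x hx
  have hUx : U ∈ 𝓝 x := hU.mem_nhds hx
  have hL : ∀ᶠ z in 𝓝 x, ∀ v k, L z v k = l k z * v k :=
    Filter.eventually_of_mem hUx fun z hz =>
      LinearMap.apply_apply_of_apply_single (f := (L z).toLinearMap) (hLdiag z hz)
  have hl' : ∀ k, DifferentiableAt ℝ (l k) x := fun k =>
    ((hl k).contDiffAt hUx).differentiableAt (by simp)
  have hX' : DifferentiableAt ℝ X x := (hX.contDiffAt hUx).differentiableAt (by simp)
  have hY' : DifferentiableAt ℝ Y x := (hY.contDiffAt hUx).differentiableAt (by simp)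
  have hLX := differentiableAt_opVec_of_diagonal hL hl' hX'
  have hLY := differentiableAt_opVec_of_diagonal hL hl' hY'
  funext k
  simp only [haantjesTensor, Pi.add_apply, Pi.sub_apply, Pi.zero_apply, hL.self_of_nhds,
    nijenhuisTorsion_apply_of_diagonal hL hl', hX', hY', hLX, hLY, opVec]
  ring
end

section
/- Let E be a two-dimensional real normed space (e.g. ℝ²), U ⊆ E open, and L : U → (E →L[ℝ] E) any smooth field of operators. Then the Haantjes tensor of L vanishes identically: H_L(X,Y)(x) = 0 for all smooth vector fields X, Y : U → E and all x ∈ U. (Paper: Example 2.4, 'if dim M = 2 then the Haantjes tensor of any field of smooth operators vanishes'.) -/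
variable {E : Type*} [NormedAddCommGroup E] [NormedSpace ℝ E]

/-!
Pointwise, the Nijenhuis torsion is a tensor: at each point it is an alternating bilinear map
`B` built from `L(x)` and `dL(x)`. In dimension two every alternating `B` is a multiple of the
determinant form, so `B(Au, Av) = det A • B(u, v)` and `B(u, Av) + B(Au, v) = tr A • B(u, v)`.
The Haantjes tensor at `x` is therefore `(A² - tr A • A + det A) B(u, v)` with `A = L(x)`,
which vanishes by Cayley–Hamilton.
-/

namespace LinearMap

variable {R M N : Type*} [CommRing R] [AddCommGroup M] [Module R M] [AddCommGroup N] [Module R N]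

theorem apply_apply_eq_trace_smul_sub_det_smul (b : Module.Basis (Fin 2) R M)
    (A : M →ₗ[R] M) (w : M) : A (A w) = trace R M A • A w - A.det • w := by
  nontriviality M
  have := Module.nontrivial R M
  have := Module.Free.of_basis b
  have := Module.Finite.of_basis b
  have hchar : A.charpoly = Polynomial.X ^ 2 - Polynomial.C (trace R M A) * Polynomial.X
      + Polynomial.C (A.det) := by
    rw [← charpoly_toMatrix A b, Matrix.charpoly_fin_two, trace_eq_matrix_trace R b,
      det_toMatrix]
  have h := congrArg (fun f : M →ₗ[R] M => f w) (aeval_self_charpoly A)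
  simp only [hchar, map_add, map_sub, map_mul, Polynomial.aeval_X, Polynomial.aeval_C,
    add_apply, sub_apply, Module.End.mul_apply, pow_two, Module.algebraMap_end_apply,
    zero_apply] at h
  rw [← sub_eq_zero, ← h]
  module

theorem IsAlt.apply_eq_smul_of_basis_fin_two {B : M →ₗ[R] M →ₗ[R] N} (hB : B.IsAlt)
    (b : Module.Basis (Fin 2) R M) (u v : M) :
    B u v = (b.repr u 0 * b.repr v 1 - b.repr u 1 * b.repr v 0) • B (b 0) (b 1) := by
  conv_lhs => rw [← b.sum_repr u, ← b.sum_repr v]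
  simp only [Fin.sum_univ_two, map_add, map_smul, add_apply, smul_apply, hB.self_eq_zero,
    ← hB.neg (b 0) (b 1), smul_zero, add_zero, zero_add, smul_neg]
  module

theorem repr_map_apply_fin_two (b : Module.Basis (Fin 2) R M) (A : M →ₗ[R] M) (u : M)
    (i : Fin 2) :
    b.repr (A u) i = toMatrix b b A i 0 * b.repr u 0 + toMatrix b b A i 1 * b.repr u 1 := by
  rw [← toMatrix_mulVec_repr b b, Matrix.mulVec, dotProduct, Fin.sum_univ_two]

theorem IsAlt.map_apply_map_eq_det_smul {B : M →ₗ[R] M →ₗ[R] N} (hB : B.IsAlt)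
    (b : Module.Basis (Fin 2) R M) (A : M →ₗ[R] M) (u v : M) :
    B (A u) (A v) = A.det • B u v := by
  rw [hB.apply_eq_smul_of_basis_fin_two b, hB.apply_eq_smul_of_basis_fin_two b u, smul_smul,
    ← LinearMap.det_toMatrix b, Matrix.det_fin_two]
  simp only [repr_map_apply_fin_two]
  congr 1; ring

theorem IsAlt.apply_map_add_map_apply_eq_trace_smul {B : M →ₗ[R] M →ₗ[R] N} (hB : B.IsAlt)
    (b : Module.Basis (Fin 2) R M) (A : M →ₗ[R] M) (u v : M) :
    B u (A v) + B (A u) v = trace R M A • B u v := by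
  rw [hB.apply_eq_smul_of_basis_fin_two b, hB.apply_eq_smul_of_basis_fin_two b (A u),
    hB.apply_eq_smul_of_basis_fin_two b u, ← add_smul, smul_smul,
    trace_eq_matrix_trace R b, Matrix.trace_fin_two]
  simp only [repr_map_apply_fin_two]
  congr 1; ring

theorem IsAlt.haantjes_eq_zero {B : M →ₗ[R] M →ₗ[R] M} (hB : B.IsAlt)
    (b : Module.Basis (Fin 2) R M) (A : M →ₗ[R] M) (u v : M) :
    A (A (B u v)) + B (A u) (A v) - A (B u (A v) + B (A u) v) = 0 := by
  rw [hB.map_apply_map_eq_det_smul b, hB.apply_map_add_map_apply_eq_trace_smul b,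
    apply_apply_eq_trace_smul_sub_det_smul b, map_smul]
  module

end LinearMap

noncomputable def nijenhuisTorsionForm (A : E →L[ℝ] E) (D : E →L[ℝ] E →L[ℝ] E) :
    E →ₗ[ℝ] E →ₗ[ℝ] E :=
  LinearMap.mk₂ ℝ (fun u v => D (A u) v - D (A v) u - A (D u v) + A (D v u))
    (fun u u' v => by simp only [map_add, add_apply]; abel)
    (fun c u v => by simp only [map_smul, smul_apply]; module)
    (fun u v v' => by simp only [map_add, add_apply]; abel)
    (fun c u v => by simp only [map_smul, smul_apply]; module)

theorem nijenhuisTorsionForm_isAlt (A : E →L[ℝ] E) (D : E →L[ℝ] E →L[ℝ] E) :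
    (nijenhuisTorsionForm A D).IsAlt := fun u => by
  simp only [nijenhuisTorsionForm, LinearMap.mk₂_apply]
  abel

theorem nijenhuisTorsion_apply_eq_form {L : E → E →L[ℝ] E} {X Y : E → E} {x : E}
    (hL : DifferentiableAt ℝ L x) (hX : DifferentiableAt ℝ X x)
    (hY : DifferentiableAt ℝ Y x) :
    nijenhuisTorsion L X Y x = nijenhuisTorsionForm (L x) (fderiv ℝ L x) (X x) (Y x) := by
  have hLX : fderiv ℝ (opVec L X) x = (L x).comp (fderiv ℝ X x) + (fderiv ℝ L x).flip (X x) :=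
    fderiv_clm_apply hL hX
  have hLY : fderiv ℝ (opVec L Y) x = (L x).comp (fderiv ℝ Y x) + (fderiv ℝ L x).flip (Y x) :=
    fderiv_clm_apply hL hY
  simp only [nijenhuisTorsion, lieBracket, hLX, hLY, nijenhuisTorsionForm, LinearMap.mk₂_apply,
    add_apply, ContinuousLinearMap.coe_comp, Function.comp_apply,
    ContinuousLinearMap.flip_apply, opVec, map_add, map_sub]
  abel

/-- Paper, Example 2.4: on a two-dimensional real normed space,
the Haantjes tensor of any smooth field of operators vanishes identically. -/
theorem haantjes_of_dim_two {E : Type*} [NormedAddCommGroup E] [NormedSpace ℝ E]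
    (hdim : Module.finrank ℝ E = 2)
    (U : Set E) (hU : IsOpen U)
    (L : E → (E →L[ℝ] E)) (hL : ContDiffOn ℝ (⊤ : ℕ∞) L U)
    (X Y : E → E) (hX : ContDiffOn ℝ (⊤ : ℕ∞) X U) (hY : ContDiffOn ℝ (⊤ : ℕ∞) Y U) :
    ∀ x ∈ U, haantjesTensor L X Y x = 0 := by
  intro x hx
  have hLx : DifferentiableAt ℝ L x :=
    (hL.differentiableOn (by simp)).differentiableAt (hU.mem_nhds hx)
  have hXx : DifferentiableAt ℝ X x :=
    (hX.differentiableOn (by simp)).differentiableAt (hU.mem_nhds hx)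
  have hYx : DifferentiableAt ℝ Y x :=
    (hY.differentiableOn (by simp)).differentiableAt (hU.mem_nhds hx)
  have hLXx : DifferentiableAt ℝ (opVec L X) x := hLx.clm_apply hXx
  have hLYx : DifferentiableAt ℝ (opVec L Y) x := hLx.clm_apply hYx
  have : Module.Finite ℝ E := Module.finite_of_finrank_eq_succ hdim
  simp only [haantjesTensor, nijenhuisTorsion_apply_eq_form hLx hXx hYx,
    nijenhuisTorsion_apply_eq_form hLx hLXx hLYx, nijenhuisTorsion_apply_eq_form hLx hXx hLYx,
    nijenhuisTorsion_apply_eq_form hLx hLXx hYx, opVec]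
  exact (nijenhuisTorsionForm_isAlt _ _).haantjes_eq_zero (Module.finBasisOfFinrankEq ℝ E hdim)
    (L x : E →ₗ[ℝ] E) (X x) (Y x)
end

section
/- Let U ⊆ ℝⁿ be open and l₁,…,lₙ : U → ℝ smooth, and let N : U → (ℝⁿ →L[ℝ] ℝⁿ) be the diagonal field of operators N(x)eᵢ = lᵢ(x)eᵢ. Assume the Nijenhuis torsion of N vanishes identically. Then for every i the differential of the eigenvalue lᵢ is an eigenform of the transposed operator with eigenvalue lᵢ: for all x ∈ U and all j, l_j(x)·(∂lᵢ/∂x_j)(x) = lᵢ(x)·(∂lᵢ/∂x_j)(x), i.e. N(x)ᵀ dlᵢ(x) = lᵢ(x) dlᵢ(x). (Paper: Proposition 2.7, stated for a diagonal(izable) Nijenhuis operator.) -/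
variable {E : Type*} [NormedAddCommGroup E] [NormedSpace ℝ E]

/-! Test the torsion on the constant coordinate fields `eᵢ, eⱼ`. Since `N eₖ = lₖ eₖ`, every
bracket is a derivative of an eigenvalue, and `T_N(eᵢ, eⱼ) = (lᵢ - lⱼ)(∂ⱼlᵢ eᵢ + ∂ᵢlⱼ eⱼ)`;
for `i ≠ j` its `eᵢ`-component is the claim. -/

open Filter Topology

section Eigenvectors

variable {L : E → (E →L[ℝ] E)} {x v w : E} {f g : E → ℝ}

theorem fderiv_opVec_const_of_eigen (hf : DifferentiableAt ℝ f x)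
    (hv : ∀ᶠ y in 𝓝 x, L y v = f y • v) :
    fderiv ℝ (opVec L fun _ => v) x = (fderiv ℝ f x).smulRight v := by
  have hv' : (opVec L fun _ => v) =ᶠ[𝓝 x] fun y => f y • v := hv
  rw [hv'.fderiv_eq, fderiv_smul_const hf]

theorem nijenhuisTorsion_const_of_eigen (hf : DifferentiableAt ℝ f x)
    (hg : DifferentiableAt ℝ g x) (hv : ∀ᶠ y in 𝓝 x, L y v = f y • v)
    (hw : ∀ᶠ y in 𝓝 x, L y w = g y • w) :
    nijenhuisTorsion L (fun _ => v) (fun _ => w) x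
      = (f x - g x) • (fderiv ℝ f x w • v + fderiv ℝ g x v • w) := by
  simp only [nijenhuisTorsion, lieBracket, fderiv_fun_const, Pi.zero_apply, zero_apply,
    fderiv_opVec_const_of_eigen hf hv, fderiv_opVec_const_of_eigen hg hw,
    ContinuousLinearMap.smulRight_apply, map_zero, smul_zero, map_add, map_sub, map_smul, opVec,
    hv.self_of_nhds, hw.self_of_nhds]
  module

end Eigenvectors

/-- Paper, Proposition 2.7: for a diagonal Nijenhuis operator
`N(x)eᵢ = lᵢ(x)eᵢ` with identically vanishing Nijenhuis torsion, the differential of each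
eigenvalue `lᵢ` is an eigenform of the transposed operator `Nᵀ` with eigenvalue `lᵢ`:
`l_j(x)·(∂lᵢ/∂x_j)(x) = lᵢ(x)·(∂lᵢ/∂x_j)(x)` for all `x ∈ U` and all `j`. -/
theorem diagonal_nijenhuis_eigenform {n : ℕ} (U : Set (Fin n → ℝ)) (hU : IsOpen U)
    (l : Fin n → (Fin n → ℝ) → ℝ) (hl : ∀ i, ContDiffOn ℝ (⊤ : ℕ∞) (l i) U)
    (N : (Fin n → ℝ) → ((Fin n → ℝ) →L[ℝ] (Fin n → ℝ)))
    (hNdiag : ∀ x ∈ U, ∀ i,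
      N x (Pi.single i 1) = l i x • (Pi.single i 1 : Fin n → ℝ))
    (hT : ∀ X Y : (Fin n → ℝ) → (Fin n → ℝ),
      ContDiffOn ℝ (⊤ : ℕ∞) X U → ContDiffOn ℝ (⊤ : ℕ∞) Y U →
      ∀ x ∈ U, nijenhuisTorsion N X Y x = 0) :
    ∀ x ∈ U, ∀ i j : Fin n,
      l j x * fderiv ℝ (l i) x (Pi.single j 1)
        = l i x * fderiv ℝ (l i) x (Pi.single j 1) := by
  intro x hx i j
  obtain rfl | hij := eq_or_ne i j
  · rfl
  have hUx : U ∈ 𝓝 x := hU.mem_nhds hx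
  have hdiff k : DifferentiableAt ℝ (l k) x :=
    ((hl k).contDiffAt hUx).differentiableAt (by simp)
  have heigen k : ∀ᶠ y in 𝓝 x, N y (Pi.single k 1) = l k y • Pi.single k 1 :=
    eventually_of_mem hUx fun y hy => hNdiag y hy k
  have htorsion :=
    hT (fun _ => Pi.single i 1) (fun _ => Pi.single j 1) contDiffOn_const contDiffOn_const x hx
  rw [nijenhuisTorsion_const_of_eigen (hdiff i) (hdiff j) (heigen i) (heigen j)] at htorsion
  have hcoord : (l i x - l j x) * fderiv ℝ (l i) x (Pi.single j 1) = 0 := by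
    simpa only [Pi.smul_apply, Pi.add_apply, Pi.single_eq_same, Pi.single_eq_of_ne hij,
      smul_eq_mul, mul_one, mul_zero, add_zero, Pi.zero_apply] using congrFun htorsion i
  linear_combination -hcoord
end

section
/- Let U ⊆ E be open in a finite-dimensional real normed space, L : U → (E →L[ℝ] E) a smooth field of operators, and f : U → ℝ smooth. Then for all smooth vector fields X, Y on U: T_{fL}(X,Y) = f²·T_L(X,Y) + f·( (LX)(f)·LY − (LY)(f)·LX + Y(f)·L²X − X(f)·L²Y ), where fL denotes the field of operators x ↦ f(x)L(x). (Paper: identity (2.13).) -/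
variable {E : Type*} [NormedAddCommGroup E] [NormedSpace ℝ E]

section

variable {f : E → ℝ} {x : E}

lemma lieBracket_smul_right {Z : E → E} (X : E → E)
    (hf : DifferentiableAt ℝ f x) (hZ : DifferentiableAt ℝ Z x) :
    lieBracket X (fun y => f y • Z y) x
      = f x • lieBracket X Z x + fderiv ℝ f x (X x) • Z x := by
  simp only [lieBracket, fderiv_fun_smul hf hZ, add_apply, smul_apply,
    ContinuousLinearMap.smulRight_apply, map_smul]
  module

lemma lieBracket_smul_left {W : E → E} (Z : E → E)
    (hf : DifferentiableAt ℝ f x) (hW : DifferentiableAt ℝ W x) :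
    lieBracket (fun y => f y • W y) Z x
      = f x • lieBracket W Z x - fderiv ℝ f x (Z x) • W x := by
  simp only [lieBracket, fderiv_fun_smul hf hW, add_apply, smul_apply,
    ContinuousLinearMap.smulRight_apply, map_smul]
  module

lemma opVec_smul (L : E → (E →L[ℝ] E)) (X : E → E) :
    opVec (fun y => f y • L y) X = fun y => f y • opVec L X y :=
  rfl

/-- `fL` rescales `LX` and `LY` by `f`, so by the Leibniz rule every bracket involving them
picks up one derivative of `f`; the rest is `f²·T_L`. -/
theorem nijenhuisTorsion_smul_apply {L : E → (E →L[ℝ] E)} {X Y : E → E}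
    (hf : DifferentiableAt ℝ f x) (hLX : DifferentiableAt ℝ (opVec L X) x)
    (hLY : DifferentiableAt ℝ (opVec L Y) x) :
    nijenhuisTorsion (fun y => f y • L y) X Y x
      = f x ^ 2 • nijenhuisTorsion L X Y x
        + f x • (fderiv ℝ f x (L x (X x)) • L x (Y x)
            - fderiv ℝ f x (L x (Y x)) • L x (X x)
            + fderiv ℝ f x (Y x) • L x (L x (X x))
            - fderiv ℝ f x (X x) • L x (L x (Y x))) := by
  simp only [nijenhuisTorsion, opVec_smul, lieBracket_smul_left _ hf hLX,
    lieBracket_smul_right _ hf hLY]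
  simp only [opVec, smul_apply, map_add, map_sub, map_smul, smul_eq_mul]
  module

end

theorem nijenhuisTorsion_smul_general {E : Type*} [NormedAddCommGroup E] [NormedSpace ℝ E]
    (U : Set E) (hU : IsOpen U)
    (L : E → (E →L[ℝ] E)) (hL : ContDiffOn ℝ (⊤ : ℕ∞) L U)
    (f : E → ℝ) (hf : ContDiffOn ℝ (⊤ : ℕ∞) f U)
    (X Y : E → E) (hX : ContDiffOn ℝ (⊤ : ℕ∞) X U) (hY : ContDiffOn ℝ (⊤ : ℕ∞) Y U) :
    ∀ x ∈ U,
      nijenhuisTorsion (fun y => f y • L y) X Y x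
        = (f x) ^ 2 • nijenhuisTorsion L X Y x
          + f x • ((fderiv ℝ f x (L x (X x))) • (L x (Y x))
              - (fderiv ℝ f x (L x (Y x))) • (L x (X x))
              + (fderiv ℝ f x (Y x)) • (L x (L x (X x)))
              - (fderiv ℝ f x (X x)) • (L x (L x (Y x)))) := by
  intro x hx
  have hxU := hU.mem_nhds hx
  exact nijenhuisTorsion_smul_apply ((hf.differentiableOn (by simp)).differentiableAt hxU)
    (((hL.clm_apply hX).differentiableOn (by simp)).differentiableAt hxU)
    (((hL.clm_apply hY).differentiableOn (by simp)).differentiableAt hxU)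

/-- Paper, identity (2.13):
`T_{fL}(X,Y) = f²·T_L(X,Y) + f·((LX)(f)·LY − (LY)(f)·LX + Y(f)·L²X − X(f)·L²Y)`. -/
theorem nijenhuisTorsion_smul {E : Type*} [NormedAddCommGroup E] [NormedSpace ℝ E]
    [FiniteDimensional ℝ E]
    (U : Set E) (hU : IsOpen U)
    (L : E → (E →L[ℝ] E)) (hL : ContDiffOn ℝ (⊤ : ℕ∞) L U)
    (f : E → ℝ) (hf : ContDiffOn ℝ (⊤ : ℕ∞) f U)
    (X Y : E → E) (hX : ContDiffOn ℝ (⊤ : ℕ∞) X U) (hY : ContDiffOn ℝ (⊤ : ℕ∞) Y U) :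
    ∀ x ∈ U,
      nijenhuisTorsion (fun y => f y • L y) X Y x
        = (f x) ^ 2 • nijenhuisTorsion L X Y x
          + f x • ((fderiv ℝ f x (L x (X x))) • (L x (Y x))
              - (fderiv ℝ f x (L x (Y x))) • (L x (X x))
              + (fderiv ℝ f x (Y x)) • (L x (L x (X x)))
              - (fderiv ℝ f x (X x)) • (L x (L x (Y x)))) :=
  nijenhuisTorsion_smul_general U hU L hL f hf X Y hX hY
end

section
/- Let U ⊆ E be open in a finite-dimensional real normed space, L : U → (E →L[ℝ] E) a smooth field of operators, and f, g : U → ℝ smooth functions. Then for all smooth vector fields X, Y on U: H_{fI + gL}(X,Y) = g⁴·H_L(X,Y), where fI + gL denotes the field of operators x ↦ f(x)·id_E + g(x)·L(x). (Paper: Proposition 2.8.) -/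
variable {E : Type*} [NormedAddCommGroup E] [NormedSpace ℝ E]

/-! The Nijenhuis torsion is tensorial: at a point where `L` has value `A` and derivative `D`, the
derivatives of `X` and `Y` cancel and `T_L(X,Y) = N(X,Y)` with
`N(u,v) = D(Au)v - D(Av)u - A(Du v) + A(Dv u)`. Hence `H_L(X,Y)` is a purely algebraic expression
`H_A(N)(X,Y)` in `A` and `N`. For `M = fI + gL` one finds `N_M = g² N_L + g·(sum of ±(γ(u)Pv - γ(v)Pu))`
with `γ` built from `df, dg` and `P ∈ {1, A, A²}`; since `P` commutes with `A`, `H_A` kills these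
terms, while `H_{f + gA}(g² N) = g⁴ H_A(N)` by bilinearity of `N`. -/

namespace Module.End

variable {R V : Type*} [CommRing R] [AddCommGroup V] [Module R V]

def nijenhuisForm (A : Module.End R V) (D : V →ₗ[R] Module.End R V) : V →ₗ[R] V →ₗ[R] V :=
  let B := D ∘ₗ A - D.compr₂ A
  B - B.flip

@[simp]
lemma nijenhuisForm_apply (A : Module.End R V) (D : V →ₗ[R] Module.End R V) (u v : V) :
    A.nijenhuisForm D u v = D (A u) v - D (A v) u - A (D u v) + A (D v u) := by
  simp only [nijenhuisForm, LinearMap.sub_apply, LinearMap.coe_comp, Function.comp_apply,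
    LinearMap.compr₂_apply, LinearMap.flip_apply]
  abel

def haantjesForm (A : Module.End R V) :
    (V →ₗ[R] V →ₗ[R] V) →ₗ[R] V →ₗ[R] V →ₗ[R] V where
  toFun B := B.compr₂ (A * A) + B.compl₁₂ A A - (B.compl₂ A + B ∘ₗ A).compr₂ A
  map_add' B₁ B₂ := by ext; simp; abel
  map_smul' c B := by ext; simp [smul_add, smul_sub]

@[simp]
lemma haantjesForm_apply (A : Module.End R V) (B : V →ₗ[R] V →ₗ[R] V) (u v : V) :
    A.haantjesForm B u v = A (A (B u v)) + B (A u) (A v) - A (B u (A v) + B (A u) v) := by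
  simp [haantjesForm]

lemma haantjesForm_flip (A : Module.End R V) (B : V →ₗ[R] V →ₗ[R] V) :
    A.haantjesForm B.flip = (A.haantjesForm B).flip := by
  ext u v
  simp only [haantjesForm_apply, LinearMap.flip_apply, add_comm (B (A v) u)]

def wedgeForm (γ : V →ₗ[R] R) (P : Module.End R V) : V →ₗ[R] V →ₗ[R] V :=
  γ.smulRight P - (γ.smulRight P).flip

lemma haantjesForm_smulRight {A P : Module.End R V} (h : Commute A P) (γ : V →ₗ[R] R) :
    A.haantjesForm (γ.smulRight P) = 0 := by
  ext u v
  have hAP (w : V) : A (P w) = P (A w) := LinearMap.congr_fun h.eq w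
  simp [hAP]

lemma haantjesForm_wedgeForm {A P : Module.End R V} (h : Commute A P) (γ : V →ₗ[R] R) :
    A.haantjesForm (wedgeForm γ P) = 0 := by
  rw [wedgeForm, map_sub, haantjesForm_flip, haantjesForm_smulRight h]
  ext
  simp

lemma haantjesForm_smul_one_add_smul (a b : R) (A : Module.End R V) (B : V →ₗ[R] V →ₗ[R] V) :
    (a • 1 + b • A).haantjesForm B = b ^ 2 • A.haantjesForm B := by
  ext u v
  simp [smul_add, smul_sub]
  module

lemma nijenhuisForm_smul_one_add_smul (a b : R) (A : Module.End R V)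
    (D : V →ₗ[R] Module.End R V) (α β : V →ₗ[R] R) :
    (a • 1 + b • A).nijenhuisForm (α.smulRight 1 + β.smulRight A + b • D) =
      b ^ 2 • A.nijenhuisForm D + b • (wedgeForm (α ∘ₗ A) 1 + wedgeForm (β ∘ₗ A) A
        - wedgeForm α A - wedgeForm β (A * A)) := by
  ext u v
  simp [wedgeForm, smul_add, smul_sub]
  module

lemma haantjesForm_nijenhuisForm_smul_one_add_smul (a b : R) (A : Module.End R V)
    (D : V →ₗ[R] Module.End R V) (α β : V →ₗ[R] R) :
    (a • 1 + b • A).haantjesForm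
        ((a • 1 + b • A).nijenhuisForm (α.smulRight 1 + β.smulRight A + b • D)) =
      b ^ 4 • A.haantjesForm (A.nijenhuisForm D) := by
  have hA : Commute A A := Commute.refl A
  rw [haantjesForm_smul_one_add_smul, nijenhuisForm_smul_one_add_smul, map_add, map_smul, map_smul,
    map_sub, map_sub, map_add, haantjesForm_wedgeForm (Commute.one_right A),
    haantjesForm_wedgeForm hA, haantjesForm_wedgeForm hA, haantjesForm_wedgeForm (hA.mul_right hA)]
  simp only [sub_zero, add_zero, smul_zero, smul_smul]
  ring_nf

end Module.End

open Module.End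

section

variable {L : E → E →L[ℝ] E} {X Y : E → E} {x : E}

lemma DifferentiableAt.opVec (hL : DifferentiableAt ℝ L x) (hX : DifferentiableAt ℝ X x) :
    DifferentiableAt ℝ (opVec L X) x :=
  hL.clm_apply hX

lemma fderiv_opVec (hL : DifferentiableAt ℝ L x) (hX : DifferentiableAt ℝ X x) (v : E) :
    fderiv ℝ (opVec L X) x v = fderiv ℝ L x v (X x) + L x (fderiv ℝ X x v) := by
  unfold opVec
  rw [fderiv_clm_apply hL hX]
  simp only [add_apply, ContinuousLinearMap.coe_comp, Function.comp_apply,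
    ContinuousLinearMap.flip_apply]
  abel

lemma nijenhuisTorsion_eq_nijenhuisForm (hL : DifferentiableAt ℝ L x)
    (hX : DifferentiableAt ℝ X x) (hY : DifferentiableAt ℝ Y x) :
    nijenhuisTorsion L X Y x =
      nijenhuisForm (L x : Module.End ℝ E) (fderiv ℝ L x).toLinearMap₁₂ (X x) (Y x) := by
  simp only [nijenhuisTorsion, lieBracket, fderiv_opVec hL hX, fderiv_opVec hL hY, opVec,
    nijenhuisForm_apply, ContinuousLinearMap.toLinearMap₁₂_apply_apply_apply,
    ContinuousLinearMap.coe_coe, map_add, map_sub]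
  abel

lemma haantjesTensor_eq_haantjesForm (hL : DifferentiableAt ℝ L x)
    (hX : DifferentiableAt ℝ X x) (hY : DifferentiableAt ℝ Y x) :
    haantjesTensor L X Y x =
      haantjesForm (L x : Module.End ℝ E)
        (nijenhuisForm (L x : Module.End ℝ E) (fderiv ℝ L x).toLinearMap₁₂) (X x) (Y x) := by
  have hLX := hL.opVec hX
  have hLY := hL.opVec hY
  rw [haantjesTensor, nijenhuisTorsion_eq_nijenhuisForm hL hX hY,
    nijenhuisTorsion_eq_nijenhuisForm hL hLX hLY, nijenhuisTorsion_eq_nijenhuisForm hL hX hLY,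
    nijenhuisTorsion_eq_nijenhuisForm hL hLX hY, haantjesForm_apply]
  rfl

lemma toLinearMap₁₂_fderiv_smul_one_add_smul {f g : E → ℝ} (hf : DifferentiableAt ℝ f x)
    (hg : DifferentiableAt ℝ g x) (hL : DifferentiableAt ℝ L x) :
    (fderiv ℝ (fun y => f y • (1 : E →L[ℝ] E) + g y • L y) x).toLinearMap₁₂ =
      (fderiv ℝ f x : E →ₗ[ℝ] ℝ).smulRight 1
        + (fderiv ℝ g x : E →ₗ[ℝ] ℝ).smulRight (L x : Module.End ℝ E)
        + g x • (fderiv ℝ L x).toLinearMap₁₂ := by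
  rw [fderiv_fun_add (by fun_prop) (by fun_prop),
    fderiv_fun_smul hf (differentiableAt_const (1 : E →L[ℝ] E)), fderiv_fun_smul hg hL]
  ext u v
  simp
  abel

end

theorem haantjes_smul_affine_general {E : Type*} [NormedAddCommGroup E] [NormedSpace ℝ E]
    (U : Set E) (hU : IsOpen U)
    (L : E → (E →L[ℝ] E)) (hL : ContDiffOn ℝ (⊤ : ℕ∞) L U)
    (f g : E → ℝ) (hf : ContDiffOn ℝ (⊤ : ℕ∞) f U) (hg : ContDiffOn ℝ (⊤ : ℕ∞) g U)
    (X Y : E → E) (hX : ContDiffOn ℝ (⊤ : ℕ∞) X U) (hY : ContDiffOn ℝ (⊤ : ℕ∞) Y U) :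
    ∀ x ∈ U,
      haantjesTensor (fun y => f y • (1 : E →L[ℝ] E) + g y • L y) X Y x
        = (g x) ^ 4 • haantjesTensor L X Y x := by
  intro x hx
  have hUx := hU.mem_nhds hx
  have hLx := (hL.contDiffAt hUx).differentiableAt (by simp)
  have hfx := (hf.contDiffAt hUx).differentiableAt (by simp)
  have hgx := (hg.contDiffAt hUx).differentiableAt (by simp)
  have hXx := (hX.contDiffAt hUx).differentiableAt (by simp)
  have hYx := (hY.contDiffAt hUx).differentiableAt (by simp)
  have hMx : DifferentiableAt ℝ (fun y => f y • (1 : E →L[ℝ] E) + g y • L y) x := by fun_prop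
  have hM_toEnd : ((f x • 1 + g x • L x : E →L[ℝ] E) : Module.End ℝ E) =
      f x • 1 + g x • (L x : Module.End ℝ E) := by
    ext; simp
  rw [haantjesTensor_eq_haantjesForm hMx hXx hYx, haantjesTensor_eq_haantjesForm hLx hXx hYx,
    toLinearMap₁₂_fderiv_smul_one_add_smul hfx hgx hLx, hM_toEnd,
    haantjesForm_nijenhuisForm_smul_one_add_smul, LinearMap.smul_apply, LinearMap.smul_apply]

/-- Paper, Proposition 2.8: `H_{fI + gL}(X,Y) = g⁴·H_L(X,Y)`. -/
theorem haantjes_smul_affine {E : Type*} [NormedAddCommGroup E] [NormedSpace ℝ E]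
    [FiniteDimensional ℝ E]
    (U : Set E) (hU : IsOpen U)
    (L : E → (E →L[ℝ] E)) (hL : ContDiffOn ℝ (⊤ : ℕ∞) L U)
    (f g : E → ℝ) (hf : ContDiffOn ℝ (⊤ : ℕ∞) f U) (hg : ContDiffOn ℝ (⊤ : ℕ∞) g U)
    (X Y : E → E) (hX : ContDiffOn ℝ (⊤ : ℕ∞) X U) (hY : ContDiffOn ℝ (⊤ : ℕ∞) Y U) :
    ∀ x ∈ U,
      haantjesTensor (fun y => f y • (1 : E →L[ℝ] E) + g y • L y) X Y x
        = (g x) ^ 4 • haantjesTensor L X Y x :=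
  haantjes_smul_affine_general U hU L hL f g hf hg X Y hX hY
end

section
/- Let U ⊆ E be open in a finite-dimensional real normed space, L : U → (E →L[ℝ] E) a smooth field of operators, μ : U → ℝ smooth with pointwise Riesz index 1, i.e. ker(L(x) − μ(x)I)² = ker(L(x) − μ(x)I) for every x ∈ U. Let X, Y be smooth vector fields with L(x)X(x) = μ(x)X(x) and L(x)Y(x) = μ(x)Y(x) for all x. Then H_L(X,Y) = 0 on U if and only if the bracket [X,Y] is again a μ-eigenvector field, i.e. L(x)[X,Y](x) = μ(x)[X,Y](x) for all x ∈ U. (Paper: Proposition 3.5 in the case of a proper eigen-distribution, Riesz index ρ_μ = 1.) -/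
variable {E : Type*} [NormedAddCommGroup E] [NormedSpace ℝ E]

/-!
For `μ`-eigenvector fields `X`, `Y` and functions `f`, `g`, the terms of the Nijenhuis torsion
that differentiate `f`, `g` or `μ` cancel, leaving
`T_L(fX, gY) = f g (L - μ)² [X, Y]`. Since `LX = μX` and `LY = μY`, every torsion entering
`H_L(X, Y)` is of this form, and collecting them gives `H_L(X, Y) = (L - μ)⁴ [X, Y]`.
Riesz index 1 makes `ker (L - μ)⁴ = ker (L - μ)`.
-/

open Filter Topology

theorem pow_apply_eq_zero_iff_of_sq {F M : Type*} [FunLike F M M] [Monoid F]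
    [IsMulApplyEqComp F M] [Zero M] {A : F} (hA : ∀ v, (A ^ 2) v = 0 ↔ A v = 0)
    {n : ℕ} (hn : n ≠ 0) (v : M) :
    (A ^ n) v = 0 ↔ A v = 0 := by
  obtain ⟨k, rfl⟩ := Nat.exists_eq_succ_of_ne_zero hn
  clear hn
  induction k generalizing v with
  | zero => simp
  | succ k ih => rw [pow_succ, mul_apply_eq_comp, ih, ← mul_apply_eq_comp, ← pow_two, hA]

theorem sub_smul_one_sq_apply {R M : Type*} [CommRing R] [TopologicalSpace M] [AddCommGroup M]
    [IsTopologicalAddGroup M] [Module R M] [ContinuousConstSMul R M]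
    (A : M →L[R] M) (m : R) (v : M) :
    ((A - m • (1 : M →L[R] M)) ^ 2) v = A (A v) - (2 * m) • A v + (m * m) • v := by
  simp only [pow_two, mul_apply_eq_comp, sub_apply, smul_apply,
    one_apply_eq_self, map_sub, map_smul]
  module

theorem lieBracket_eq_of_eventuallyEq {X₁ X₂ Y₁ Y₂ : E → E} {x : E}
    (hX : X₁ =ᶠ[𝓝 x] X₂) (hY : Y₁ =ᶠ[𝓝 x] Y₂) :
    lieBracket X₁ Y₁ x = lieBracket X₂ Y₂ x := by
  simp only [lieBracket, hX.fderiv_eq, hY.fderiv_eq, hX.eq_of_nhds, hY.eq_of_nhds]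

theorem lieBracket_smul_smul {f g : E → ℝ} {X Y : E → E} {x : E}
    (hf : DifferentiableAt ℝ f x) (hg : DifferentiableAt ℝ g x)
    (hX : DifferentiableAt ℝ X x) (hY : DifferentiableAt ℝ Y x) :
    lieBracket (fun y => f y • X y) (fun y => g y • Y y) x
      = (f x * g x) • lieBracket X Y x + (f x * fderiv ℝ g x (X x)) • Y x
        - (g x * fderiv ℝ f x (Y x)) • X x := by
  simp only [lieBracket, fderiv_fun_smul hf hX, fderiv_fun_smul hg hY, add_apply, smul_apply,
    ContinuousLinearMap.smulRight_apply, map_smul]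
  module

theorem opVec_eventuallyEq_smul {L : E → (E →L[ℝ] E)} {μ f : E → ℝ} {X X' : E → E} {x : E}
    (hX' : X' =ᶠ[𝓝 x] fun y => f y • X y) (hXe : ∀ᶠ y in 𝓝 x, L y (X y) = μ y • X y) :
    opVec L X' =ᶠ[𝓝 x] fun y => (f y * μ y) • X y := by
  filter_upwards [hX', hXe] with y hy hLy
  simp only [opVec, hy, map_smul, hLy, smul_smul]

theorem nijenhuisTorsion_eq_of_eigen {L : E → (E →L[ℝ] E)} {μ f g : E → ℝ}
    {X Y X' Y' : E → E} {x : E}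
    (hX' : X' =ᶠ[𝓝 x] fun y => f y • X y) (hY' : Y' =ᶠ[𝓝 x] fun y => g y • Y y)
    (hXe : ∀ᶠ y in 𝓝 x, L y (X y) = μ y • X y) (hYe : ∀ᶠ y in 𝓝 x, L y (Y y) = μ y • Y y)
    (hf : DifferentiableAt ℝ f x) (hg : DifferentiableAt ℝ g x) (hμ : DifferentiableAt ℝ μ x)
    (hX : DifferentiableAt ℝ X x) (hY : DifferentiableAt ℝ Y x) :
    nijenhuisTorsion L X' Y' x
      = (f x * g x) • ((L x - μ x • (1 : E →L[ℝ] E)) ^ 2) (lieBracket X Y x) := by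
  have hLX' := opVec_eventuallyEq_smul hX' hXe
  have hLY' := opVec_eventuallyEq_smul hY' hYe
  simp only [nijenhuisTorsion, sub_smul_one_sq_apply,
    lieBracket_eq_of_eventuallyEq hX' hY', lieBracket_eq_of_eventuallyEq hLX' hLY',
    lieBracket_eq_of_eventuallyEq hX' hLY', lieBracket_eq_of_eventuallyEq hLX' hY',
    lieBracket_smul_smul hf hg hX hY, lieBracket_smul_smul (hf.fun_mul hμ) (hg.fun_mul hμ) hX hY,
    lieBracket_smul_smul hf (hg.fun_mul hμ) hX hY, lieBracket_smul_smul (hf.fun_mul hμ) hg hX hY,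
    fderiv_fun_mul hf hμ, fderiv_fun_mul hg hμ, map_add, map_sub, map_smul, hXe.self_of_nhds,
    hYe.self_of_nhds, smul_smul, add_apply, smul_apply, smul_eq_mul]
  module

theorem haantjesTensor_eq_of_eigen {L : E → (E →L[ℝ] E)} {μ : E → ℝ} {X Y : E → E} {x : E}
    (hXe : ∀ᶠ y in 𝓝 x, L y (X y) = μ y • X y) (hYe : ∀ᶠ y in 𝓝 x, L y (Y y) = μ y • Y y)
    (hμ : DifferentiableAt ℝ μ x) (hX : DifferentiableAt ℝ X x) (hY : DifferentiableAt ℝ Y x) :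
    haantjesTensor L X Y x = ((L x - μ x • (1 : E →L[ℝ] E)) ^ 4) (lieBracket X Y x) := by
  have hX1 : X =ᶠ[𝓝 x] fun y => (1 : ℝ) • X y := .of_eq (funext fun y => (one_smul ℝ _).symm)
  have hY1 : Y =ᶠ[𝓝 x] fun y => (1 : ℝ) • Y y := .of_eq (funext fun y => (one_smul ℝ _).symm)
  have hLX : opVec L X =ᶠ[𝓝 x] fun y => μ y • X y := hXe
  have hLY : opVec L Y =ᶠ[𝓝 x] fun y => μ y • Y y := hYe
  have h1 : DifferentiableAt ℝ (fun _ => (1 : ℝ)) x := differentiableAt_const _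
  rw [show 4 = 2 + 2 from rfl, pow_add, mul_apply_eq_comp, sub_smul_one_sq_apply]
  simp only [haantjesTensor,
    nijenhuisTorsion_eq_of_eigen hX1 hY1 hXe hYe h1 h1 hμ hX hY,
    nijenhuisTorsion_eq_of_eigen hLX hLY hXe hYe hμ hμ hμ hX hY,
    nijenhuisTorsion_eq_of_eigen hX1 hLY hXe hYe h1 hμ hμ hX hY,
    nijenhuisTorsion_eq_of_eigen hLX hY1 hXe hYe hμ h1 hμ hX hY, map_add, map_smul]
  module

theorem haantjes_vanish_iff_bracket_eigen_general {E : Type*}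
    [NormedAddCommGroup E] [NormedSpace ℝ E]
    (U : Set E) (hU : IsOpen U)
    (L : E → (E →L[ℝ] E))
    (μ : E → ℝ) (hμ : ContDiffOn ℝ (⊤ : ℕ∞) μ U)
    (hRiesz : ∀ x ∈ U, ∀ v : E,
      ((L x - μ x • (1 : E →L[ℝ] E)) ^ 2) v = 0 ↔ (L x - μ x • (1 : E →L[ℝ] E)) v = 0)
    (X Y : E → E) (hX : ContDiffOn ℝ (⊤ : ℕ∞) X U) (hY : ContDiffOn ℝ (⊤ : ℕ∞) Y U)
    (hXeig : ∀ x ∈ U, L x (X x) = μ x • X x)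
    (hYeig : ∀ x ∈ U, L x (Y x) = μ x • Y x) :
    (∀ x ∈ U, haantjesTensor L X Y x = 0)
      ↔ (∀ x ∈ U, L x (lieBracket X Y x) = μ x • lieBracket X Y x) := by
  refine forall₂_congr fun x hx => ?_
  have hUx : U ∈ 𝓝 x := hU.mem_nhds hx
  rw [haantjesTensor_eq_of_eigen (eventually_of_mem hUx hXeig) (eventually_of_mem hUx hYeig)
      ((hμ.differentiableOn (by simp)).differentiableAt hUx)
      ((hX.differentiableOn (by simp)).differentiableAt hUx)
      ((hY.differentiableOn (by simp)).differentiableAt hUx),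
    pow_apply_eq_zero_iff_of_sq (hRiesz x hx) four_ne_zero, sub_apply, smul_apply,
    one_apply_eq_self, sub_eq_zero]

/-- Paper, Proposition 3.5, Riesz index 1: let `μ` have pointwise
Riesz index 1, i.e. `ker(L(x) − μ(x)I)² = ker(L(x) − μ(x)I)`, and let `X`, `Y` be
`μ`-eigenvector fields. Then `H_L(X,Y) = 0` on `U` iff `[X,Y]` is again a
`μ`-eigenvector field on `U`. -/
theorem haantjes_vanish_iff_bracket_eigen {E : Type*}
    [NormedAddCommGroup E] [NormedSpace ℝ E] [FiniteDimensional ℝ E]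
    (U : Set E) (hU : IsOpen U)
    (L : E → (E →L[ℝ] E)) (hL : ContDiffOn ℝ (⊤ : ℕ∞) L U)
    (μ : E → ℝ) (hμ : ContDiffOn ℝ (⊤ : ℕ∞) μ U)
    (hRiesz : ∀ x ∈ U, ∀ v : E,
      ((L x - μ x • (1 : E →L[ℝ] E)) ^ 2) v = 0 ↔ (L x - μ x • (1 : E →L[ℝ] E)) v = 0)
    (X Y : E → E) (hX : ContDiffOn ℝ (⊤ : ℕ∞) X U) (hY : ContDiffOn ℝ (⊤ : ℕ∞) Y U)
    (hXeig : ∀ x ∈ U, L x (X x) = μ x • X x)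
    (hYeig : ∀ x ∈ U, L x (Y x) = μ x • Y x) :
    (∀ x ∈ U, haantjesTensor L X Y x = 0)
      ↔ (∀ x ∈ U, L x (lieBracket X Y x) = μ x • lieBracket X Y x) :=
  haantjes_vanish_iff_bracket_eigen_general U hU L μ hμ hRiesz X Y hX hY hXeig hYeig
end

section
/- Let Ω be an invertible skew-symmetric real 2n×2n matrix and K a real 2n×2n matrix with KᵀΩ = ΩK. Then for every λ ∈ ℝ and every m ∈ ℕ, the dimension of ker(K − λI)ᵐ is even. In particular, every real eigenvalue of K has even geometric multiplicity (dim ker(K − λI)) and even algebraic multiplicity (dim ker(K − λI)^{2n}). (Paper: Corollary 4.3.) -/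
/-!
`Ω (K - λ)ᵐ` is skew-symmetric because `K` is `Ω`-self-adjoint, and it has the same kernel as
`(K - λ)ᵐ` because `Ω` is invertible. A real skew-symmetric matrix `S` has even rank: if the
columns of `C` form a basis of `range S`, then `ker S ∩ range S = 0` makes the skew-symmetric
matrix `Cᵀ S C` invertible, and a skew-symmetric matrix of odd size has determinant
`det S = (-1)ᵈ det S = -det S`, hence `0`.
-/

open Matrix

namespace Matrix

variable {ι κ R : Type*} [Fintype ι]

theorem det_eq_zero_of_transpose_eq_neg [DecidableEq ι] [CommRing R] [NoZeroDivisors R]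
    [CharZero R] {S : Matrix ι ι R} (hS : Sᵀ = -S) (hodd : Odd (Fintype.card ι)) :
    S.det = 0 := by
  have h : S.det = -S.det := by
    conv_lhs => rw [← det_transpose, hS, det_neg, hodd.neg_one_pow, neg_one_mul]
  exact CharZero.eq_neg_self_iff.mp h

section LinearOrderedField

variable [Field R] [LinearOrder R] [IsStrictOrderedRing R]

theorem eq_zero_of_mem_range_of_transpose_mulVec_eq_zero [Fintype κ] {A : Matrix ι κ R}
    {x : ι → R} (hx : x ∈ LinearMap.range A.mulVecLin) (hAx : Aᵀ *ᵥ x = 0) : x = 0 := by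
  obtain ⟨y, rfl⟩ := hx
  have hy : y ∈ LinearMap.ker (Aᵀ * A).mulVecLin := by
    rwa [LinearMap.mem_ker, mulVecLin_apply, ← mulVec_mulVec]
  rwa [ker_mulVecLin_transpose_mul_self] at hy

theorem det_transpose_mul_mul_ne_zero_of_transpose_eq_neg [Fintype κ] [DecidableEq κ]
    {S : Matrix ι ι R} (hS : Sᵀ = -S) {C : Matrix ι κ R}
    (hrange : LinearMap.range C.mulVecLin = LinearMap.range S.mulVecLin)
    (hC : Function.Injective C.mulVec) : (Cᵀ * S * C).det ≠ 0 := by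
  rw [Ne, ← exists_mulVec_eq_zero_iff]
  rintro ⟨v, hv, hPv⟩
  have hSCv : S *ᵥ (C *ᵥ v) = 0 := by
    refine eq_zero_of_mem_range_of_transpose_mulVec_eq_zero (A := C) ?_ ?_
    · rw [hrange]; exact ⟨C *ᵥ v, rfl⟩
    · simpa [mulVec_mulVec, Matrix.mul_assoc] using hPv
  have hCv : C *ᵥ v = 0 := by
    refine eq_zero_of_mem_range_of_transpose_mulVec_eq_zero (A := S) ?_ ?_
    · rw [← hrange]; exact ⟨v, rfl⟩
    · rw [hS, neg_mulVec, hSCv, neg_zero]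
  exact hv (hC (hCv.trans (mulVec_zero C).symm))

theorem even_rank_of_transpose_eq_neg {S : Matrix ι ι R} (hS : Sᵀ = -S) : Even S.rank := by
  classical
  let b := Module.finBasis R (LinearMap.range S.mulVecLin)
  let f := (LinearMap.range S.mulVecLin).subtype ∘ₗ b.equivFun.symm.toLinearMap
  let C := LinearMap.toMatrix' f
  have hC : C.mulVecLin = f := (toLin'_apply' C).symm.trans (toLin'_toMatrix' f)
  have hrange : LinearMap.range C.mulVecLin = LinearMap.range S.mulVecLin := by
    rw [hC, LinearMap.range_comp, LinearEquiv.range, Submodule.map_top, Submodule.range_subtype]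
  have hinj : Function.Injective C.mulVec := by
    change Function.Injective C.mulVecLin
    rw [hC]
    exact (Submodule.injective_subtype _).comp b.equivFun.symm.injective
  have hskew : (Cᵀ * S * C)ᵀ = -(Cᵀ * S * C) := by
    simp [transpose_mul, hS, Matrix.mul_assoc]
  have hdet := det_transpose_mul_mul_ne_zero_of_transpose_eq_neg hS hrange hinj
  have hcard := mt (det_eq_zero_of_transpose_eq_neg hskew) hdet
  rwa [Fintype.card_fin, Nat.not_odd_iff_even] at hcard

theorem even_finrank_ker_iff_of_transpose_eq_neg {S : Matrix ι ι R} (hS : Sᵀ = -S) :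
    Even (Module.finrank R (LinearMap.ker S.mulVecLin)) ↔ Even (Fintype.card ι) := by
  rw [← Module.finrank_fintype_fun_eq_card R,
    ← LinearMap.finrank_range_add_finrank_ker S.mulVecLin, Nat.even_add]
  exact (iff_true_left (even_rank_of_transpose_eq_neg hS)).symm

end LinearOrderedField

theorem ker_mulVecLin_mul_of_isUnit [DecidableEq ι] [Field R] {Ω B : Matrix ι ι R}
    (hΩ : IsUnit Ω) : LinearMap.ker (Ω * B).mulVecLin = LinearMap.ker B.mulVecLin := by
  rw [mulVecLin_mul, LinearMap.ker_comp,
    LinearMap.ker_eq_bot.mpr (mulVec_injective_iff_isUnit.mpr hΩ), Submodule.comap_bot]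

namespace IsSelfAdjoint

variable [CommRing R] {Ω A : Matrix ι ι R}

theorem pow [DecidableEq ι] (hA : Ω.IsSelfAdjoint A) (m : ℕ) : Ω.IsSelfAdjoint (A ^ m) := by
  have hsemiconj : SemiconjBy Ω A Aᵀ := Eq.symm hA
  change (A ^ m)ᵀ * Ω = Ω * A ^ m
  rw [transpose_pow]
  exact (hsemiconj.pow_right m).symm

theorem sub_smul_one [DecidableEq ι] (hA : Ω.IsSelfAdjoint A) (c : R) :
    Ω.IsSelfAdjoint (A - c • 1) := by
  unfold Matrix.IsSelfAdjoint IsAdjointPair at hA ⊢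
  rw [transpose_sub, transpose_smul, transpose_one, Matrix.sub_mul, Matrix.mul_sub, hA,
    smul_one_mul, mul_smul_one]

theorem transpose_mul_eq_neg (hΩ : Ωᵀ = -Ω) (hA : Ω.IsSelfAdjoint A) :
    (Ω * A)ᵀ = -(Ω * A) := by
  rw [transpose_mul, hΩ, Matrix.mul_neg]
  exact congrArg Neg.neg hA

end IsSelfAdjoint

end Matrix

/-- Paper, Corollary 4.3: if `Ω` is an invertible skew-symmetric
`2n×2n` real matrix and `KᵀΩ = ΩK`, then for every `λ ∈ ℝ` and `m ∈ ℕ` the dimension of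
`ker(K − λI)ᵐ` is even; in particular every real eigenvalue of `K` has even geometric
multiplicity and even algebraic multiplicity. -/
theorem even_dim_generalized_eigenspaces {n : ℕ} (Ω K : Matrix (Fin (2 * n)) (Fin (2 * n)) ℝ)
    (hΩinv : IsUnit Ω) (hΩskew : Ωᵀ = -Ω)
    (hK : Kᵀ * Ω = Ω * K) :
    (∀ (lam : ℝ) (m : ℕ),
      Even (Module.finrank ℝ
        (LinearMap.ker (Matrix.toLin' ((K - lam • (1 : Matrix (Fin (2 * n)) (Fin (2 * n)) ℝ)) ^ m))))) ∧
    (∀ lam : ℝ,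
      Even (Module.finrank ℝ
        (LinearMap.ker (Matrix.toLin' (K - lam • (1 : Matrix (Fin (2 * n)) (Fin (2 * n)) ℝ))))) ∧
      Even (Module.finrank ℝ
        (LinearMap.ker (Matrix.toLin' ((K - lam • (1 : Matrix (Fin (2 * n)) (Fin (2 * n)) ℝ)) ^ (2 * n)))))) := by
  have hKsa : Ω.IsSelfAdjoint K := hK
  have key : ∀ (lam : ℝ) (m : ℕ),
      Even (Module.finrank ℝ (LinearMap.ker (toLin' ((K - lam • 1) ^ m)))) := by
    intro lam m
    have hskew := ((hKsa.sub_smul_one lam).pow m).transpose_mul_eq_neg hΩskew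
    rw [toLin'_apply', ← ker_mulVecLin_mul_of_isUnit hΩinv,
      even_finrank_ker_iff_of_transpose_eq_neg hskew, Fintype.card_fin]
    exact even_two_mul n
  exact ⟨key, fun lam => ⟨pow_one (K - lam • 1) ▸ key lam 1, key lam (2 * n)⟩⟩
end

section
/- Let U ⊆ ℝ^{2n} be open, let K₀ = I and K₁,…,K_{n−1} : U → M_{2n}(ℝ) be smooth matrix-valued maps satisfying, at every x ∈ U, the compatibility K_α(x)ᵀJ = J K_α(x) and the commutativity K_α(x)K_β(x) = K_β(x)K_α(x) for all α, β ∈ {0,…,n−1}. Let H = H₁, H₂,…,Hₙ : U → ℝ be smooth functions forming a Lenard–Haantjes chain: ∇H_{α+1}(x) = K_α(x)ᵀ ∇H(x) for all x and α = 0,…,n−1. Then the functions are pairwise in involution: {H_i, H_j} = 0 on U for all i, j. (Paper: Theorem 5.1, first part — functions in a Lenard–Haantjes chain on an ωH manifold are in involution, hence the system is integrable by quadratures.) -/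
open Matrix

/-- Phase space `ℝ^{2n}` with coordinates indexed by `Fin n ⊕ Fin n`:
`Sum.inl i` is the `i`-th position-type coordinate and `Sum.inr i` the `i`-th
momentum-type coordinate. -/
abbrev Phase (n : ℕ) := (Fin n ⊕ Fin n) → ℝ

/-- Gradient (vector of partial derivatives) of a function on phase space. -/
noncomputable def grad {n : ℕ} (F : Phase n → ℝ) (x : Phase n) : Phase n :=
  fun s => fderiv ℝ F x (Pi.single s 1)

/-- Canonical Poisson bracket
`{F,G} = Σᵢ (∂F/∂qᵢ·∂G/∂pᵢ − ∂F/∂pᵢ·∂G/∂qᵢ)`. -/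
noncomputable def poisson {n : ℕ} (F G : Phase n → ℝ) (x : Phase n) : ℝ :=
  ∑ i : Fin n,
    (grad F x (Sum.inl i) * grad G x (Sum.inr i)
      - grad F x (Sum.inr i) * grad G x (Sum.inl i))

/-- The standard symplectic matrix `J = [[0, Iₙ], [−Iₙ, 0]]`. -/
def symplJ (n : ℕ) : Matrix (Fin n ⊕ Fin n) (Fin n ⊕ Fin n) ℝ :=
  Matrix.fromBlocks 0 1 (-1) 0

/-- Lie bracket of vector fields on phase space. -/
noncomputable def lieBracketP {n : ℕ} (X Y : Phase n → Phase n) : Phase n → Phase n :=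
  fun x => fderiv ℝ Y x (X x) - fderiv ℝ X x (Y x)

/-- The vector field `LX : x ↦ L(x)·X(x)` associated with a matrix-valued field `L`. -/
noncomputable def matVec {n : ℕ}
    (L : Phase n → Matrix (Fin n ⊕ Fin n) (Fin n ⊕ Fin n) ℝ)
    (X : Phase n → Phase n) : Phase n → Phase n :=
  fun x => (L x) *ᵥ (X x)

/-- Nijenhuis torsion of a matrix-valued field of operators on phase space:
`T_L(X,Y) = L²[X,Y] + [LX,LY] − L([X,LY] + [LX,Y])`. -/
noncomputable def nijenhuisTorsionP {n : ℕ}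
    (L : Phase n → Matrix (Fin n ⊕ Fin n) (Fin n ⊕ Fin n) ℝ)
    (X Y : Phase n → Phase n) : Phase n → Phase n :=
  fun x =>
    L x *ᵥ (L x *ᵥ lieBracketP X Y x) + lieBracketP (matVec L X) (matVec L Y) x
      - L x *ᵥ (lieBracketP X (matVec L Y) x + lieBracketP (matVec L X) Y x)

/-- Haantjes tensor of a matrix-valued field of operators on phase space:
`H_L(X,Y) = L²T_L(X,Y) + T_L(LX,LY) − L(T_L(X,LY) + T_L(LX,Y))`. -/
noncomputable def haantjesTensorP {n : ℕ}
    (L : Phase n → Matrix (Fin n ⊕ Fin n) (Fin n ⊕ Fin n) ℝ)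
    (X Y : Phase n → Phase n) : Phase n → Phase n :=
  fun x =>
    L x *ᵥ (L x *ᵥ nijenhuisTorsionP L X Y x)
      + nijenhuisTorsionP L (matVec L X) (matVec L Y) x
      - L x *ᵥ (nijenhuisTorsionP L X (matVec L Y) x
          + nijenhuisTorsionP L (matVec L X) Y x)

/-!
With `g = ∇H_0` the chain gives `∇H_i = K_iᵀ g`, and `{F, G} = ∇F ⬝ J ∇G`, so
`{H_i, H_j} = gᵀ K_i J K_jᵀ g`. Since `J² = -1`, compatibility `K_jᵀ J = J K_j` can be
turned around into `J K_jᵀ = K_j J`; hence `K_i J K_jᵀ = K_i K_j J`, and this matrix is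
skew-symmetric because `K_i` and `K_j` commute and are compatible. The quadratic form of a
skew-symmetric matrix vanishes.
-/

namespace Matrix

variable {m R : Type*} [Fintype m] [CommRing R]

theorem dotProduct_mulVec_self_eq_zero_of_transpose_eq_neg [IsAddTorsionFree R]
    {S : Matrix m m R} (hS : Sᵀ = -S) (g : m → R) : g ⬝ᵥ (S *ᵥ g) = 0 :=
  self_eq_neg.mp <|
    calc g ⬝ᵥ (S *ᵥ g) = (Sᵀ *ᵥ g) ⬝ᵥ g := by
          rw [dotProduct_mulVec, mulVec_transpose]
      _ = -(g ⬝ᵥ (S *ᵥ g)) := by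
          rw [hS, neg_mulVec, neg_dotProduct, dotProduct_comm]

variable [DecidableEq m] {J A B : Matrix m m R}

theorem mul_transpose_eq_of_transpose_mul_eq (hJ : J * J = -1) (hA : Aᵀ * J = J * A) :
    J * Aᵀ = A * J :=
  calc J * Aᵀ = -(J * Aᵀ * (J * J)) := by rw [hJ, Matrix.mul_neg, Matrix.mul_one, neg_neg]
    _ = -(J * (J * A) * J) := by rw [← hA]; simp only [Matrix.mul_assoc]
    _ = A * J := by rw [← Matrix.mul_assoc, hJ]; simp

theorem transpose_mul_mul_transpose_eq_neg (hJ : J * J = -1) (hJT : Jᵀ = -J)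
    (hA : Aᵀ * J = J * A) (hB : Bᵀ * J = J * B) (hAB : A * B = B * A) :
    (A * J * Bᵀ)ᵀ = -(A * J * Bᵀ) :=
  calc (A * J * Bᵀ)ᵀ = -(B * (J * Aᵀ)) := by
        simp only [transpose_mul, transpose_transpose, hJT, Matrix.mul_neg, Matrix.neg_mul,
          Matrix.mul_assoc]
    _ = -(A * B * J) := by
        rw [mul_transpose_eq_of_transpose_mul_eq hJ hA, ← Matrix.mul_assoc, hAB]
    _ = -(A * J * Bᵀ) := by
        rw [Matrix.mul_assoc A J, mul_transpose_eq_of_transpose_mul_eq hJ hB, Matrix.mul_assoc]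

theorem transpose_mulVec_dotProduct_mulVec_transpose_mulVec_eq_zero [IsAddTorsionFree R]
    (hJ : J * J = -1) (hJT : Jᵀ = -J) (hA : Aᵀ * J = J * A) (hB : Bᵀ * J = J * B)
    (hAB : A * B = B * A) (g : m → R) : (Aᵀ *ᵥ g) ⬝ᵥ (J *ᵥ (Bᵀ *ᵥ g)) = 0 := by
  rw [mulVec_mulVec, mulVec_transpose, ← dotProduct_mulVec, mulVec_mulVec, ← Matrix.mul_assoc]
  exact dotProduct_mulVec_self_eq_zero_of_transpose_eq_neg
    (transpose_mul_mul_transpose_eq_neg hJ hJT hA hB hAB) g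

end Matrix

theorem symplJ_eq_neg_J (n : ℕ) : symplJ n = -Matrix.J (Fin n) ℝ := by
  rw [symplJ, Matrix.J, fromBlocks_neg, neg_zero, neg_neg]

theorem symplJ_mul_self (n : ℕ) : symplJ n * symplJ n = -1 := by
  rw [symplJ_eq_neg_J, neg_mul_neg, J_squared]

theorem symplJ_transpose (n : ℕ) : (symplJ n)ᵀ = -symplJ n := by
  rw [symplJ_eq_neg_J, transpose_neg, J_transpose]

theorem poisson_eq_dotProduct_symplJ_mulVec {n : ℕ} (F G : Phase n → ℝ) (x : Phase n) :
    poisson F G x = grad F x ⬝ᵥ (symplJ n *ᵥ grad G x) := by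
  simp only [poisson, symplJ, dotProduct, mulVec, Fintype.sum_sum_type, fromBlocks_apply₁₁,
    fromBlocks_apply₁₂, fromBlocks_apply₂₁, fromBlocks_apply₂₂]
  simp [one_apply, Finset.sum_add_distrib, sub_eq_add_neg]

theorem lenard_haantjes_chain_involution_general {n : ℕ} [NeZero n]
    (U : Set (Phase n))
    (H : Fin n → Phase n → ℝ)
    (K : Fin n → Phase n → Matrix (Fin n ⊕ Fin n) (Fin n ⊕ Fin n) ℝ)
    (hcompat : ∀ α, ∀ x ∈ U, (K α x)ᵀ * symplJ n = symplJ n * K α x)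
    (hcomm : ∀ α β, ∀ x ∈ U, K α x * K β x = K β x * K α x)
    (hchain : ∀ j, ∀ x ∈ U, grad (H j) x = (K j x)ᵀ *ᵥ grad (H 0) x) :
    ∀ i j, ∀ x ∈ U, poisson (H i) (H j) x = 0 := by
  intro i j x hx
  rw [poisson_eq_dotProduct_symplJ_mulVec, hchain i x hx, hchain j x hx]
  exact transpose_mulVec_dotProduct_mulVec_transpose_mulVec_eq_zero (symplJ_mul_self n)
    (symplJ_transpose n) (hcompat i x hx) (hcompat j x hx) (hcomm i j x hx) _

/-- Paper, Theorem 5.1, first part: functions forming a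
Lenard–Haantjes chain `∇H_{α+1} = K_αᵀ∇H` for operators `K_α` that are compatible with
the symplectic structure (`K_αᵀJ = JK_α`) and pairwise commute, are pairwise in
involution with respect to the canonical Poisson bracket. -/
theorem lenard_haantjes_chain_involution {n : ℕ} [NeZero n]
    (U : Set (Phase n)) (hU : IsOpen U)
    (H : Fin n → Phase n → ℝ)
    (hH : ∀ j, ContDiffOn ℝ (⊤ : ℕ∞) (H j) U)
    (K : Fin n → Phase n → Matrix (Fin n ⊕ Fin n) (Fin n ⊕ Fin n) ℝ)
    (hKsmooth : ∀ α a b, ContDiffOn ℝ (⊤ : ℕ∞) (fun x => K α x a b) U)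
    (hK0 : ∀ x ∈ U, K 0 x = 1)
    (hcompat : ∀ α, ∀ x ∈ U, (K α x)ᵀ * symplJ n = symplJ n * K α x)
    (hcomm : ∀ α β, ∀ x ∈ U, K α x * K β x = K β x * K α x)
    (hchain : ∀ j, ∀ x ∈ U, grad (H j) x = (K j x)ᵀ *ᵥ grad (H 0) x) :
    ∀ i j, ∀ x ∈ U, poisson (H i) (H j) x = 0 :=
  lenard_haantjes_chain_involution_general U H K hcompat hcomm hchain
end

section
/- Let U ⊆ ℝ^{2n} be open with coordinates (J₁,…,Jₙ,φ₁,…,φₙ) (action-angle variables), and let H = H₁, H₂,…,Hₙ : U → ℝ be smooth functions depending only on (J₁,…,Jₙ), with frequencies ν_i := ∂H/∂J_i nowhere zero on U. Define for α = 0,…,n−1 the diagonal matrix fields K_α(x) whose action is K_α = Σ_{i=1}^n (∂H_{α+1}/∂J_i)/ν_i · ( ∂/∂J_i ⊗ dJ_i + ∂/∂φ_i ⊗ dφ_i ). Then: (1) each K_α satisfies K_αᵀJ = JK_α where J is the standard symplectic matrix for ω = Σ dJ_i ∧ dφ_i; (2) the K_α pairwise commute; (3) each K_α, being a diagonal field of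 operators, has identically vanishing Haantjes tensor; (4) the chain relations K_α(x)ᵀ∇H(x) = ∇H_{α+1}(x) hold; and (5) if the differentials dH₁,…,dHₙ are linearly independent at each point, then K₀,…,K_{n−1} are pointwise linearly independent. (Paper: Theorem 5.1, converse part — every non-degenerate Liouville-integrable system admits, near an Arnold torus, the ωH structure (5.2).) -/
/-!
Every `K_α` is diagonal in the action–angle frame, with the same entry `∂H_α/∂J_i / ν_i` on
`J_i` and on `φ_i`; this alone gives compatibility with `J` and commutativity. For a diagonal
field `L = diag(l_s)` the torsion has components `T(X,Y)_s = a_s(X) Y_s - a_s(Y) X_s` with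
`a_s(X) = dl_s(LX) - l_s dl_s(X)`, and substituting this into the Haantjes tensor everything
cancels. As the `H_α` do not depend on the angles, `K_αᵀ∇H = ∇H_α` reduces to
`(∂H_α/∂J_i / ν_i) ν_i = ∂H_α/∂J_i`; the linear map `K ↦ Kᵀ∇H` then carries any linear relation
among the `K_α` to one among the `∇H_α`.
-/

open Matrix

/-- The diagonal Haantjes operators (5.2) of an integrable system in action-angle
variables: `K_α = Σᵢ (∂H_{α+1}/∂Jᵢ)/νᵢ · (∂/∂Jᵢ ⊗ dJᵢ + ∂/∂φᵢ ⊗ dφᵢ)`, where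
`νᵢ = ∂H/∂Jᵢ` and the actions are the `Sum.inl` coordinates. -/
noncomputable def actionAngleK {n : ℕ} [NeZero n] (H : Fin n → Phase n → ℝ)
    (α : Fin n) (x : Phase n) : Matrix (Fin n ⊕ Fin n) (Fin n ⊕ Fin n) ℝ :=
  Matrix.diagonal (fun s =>
    fderiv ℝ (H α) x (Pi.single (Sum.inl (Sum.elim id id s)) 1) /
      fderiv ℝ (H 0) x (Pi.single (Sum.inl (Sum.elim id id s)) 1))

lemma differentiableAt_fderiv_apply {E : Type*} [NormedAddCommGroup E] [NormedSpace ℝ E]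
    {f : E → ℝ} {x : E} (hf : ContDiffAt ℝ 2 f x) (v : E) :
    DifferentiableAt ℝ (fun y => fderiv ℝ f y v) x :=
  ((hf.fderiv_right (m := 1) (by norm_num)).differentiableAt one_ne_zero).clm_apply
    (differentiableAt_const v)

lemma fderiv_eq_zero_of_forall_add_smul_eq {E : Type*} [NormedAddCommGroup E] [NormedSpace ℝ E]
    {f : E → ℝ} {x v : E} (hf : ∀ t : ℝ, f (x + t • v) = f x) : fderiv ℝ f x v = 0 := by
  by_cases hd : DifferentiableAt ℝ f x
  · rw [← hd.lineDeriv_eq_fderiv, lineDeriv, funext hf, deriv_const]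
  · simp [fderiv_zero_of_not_differentiableAt hd]

lemma fderiv_apply_apply {E ι : Type*} [NormedAddCommGroup E] [NormedSpace ℝ E] [Fintype ι]
    {Φ : E → ι → ℝ} {x : E} (hΦ : DifferentiableAt ℝ Φ x) (v : E) (i : ι) :
    fderiv ℝ Φ x v i = fderiv ℝ (fun y => Φ y i) x v := by
  rw [fderiv_apply hΦ]
  rfl

lemma linearIndependent_of_transpose_mulVec {R ι m n : Type*} [CommRing R] [Fintype m]
    {K : ι → Matrix m n R} (v : m → R)
    (h : LinearIndependent R fun i => (K i)ᵀ *ᵥ v) : LinearIndependent R K := by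
  refine LinearIndependent.of_comp (vecMulBilin R R v) ?_
  simpa [Function.comp_def, vecMulBilin_apply, mulVec_transpose] using h

section DiagonalField

variable {n : ℕ} (l : Fin n ⊕ Fin n → Phase n → ℝ)

lemma matVec_diagonal (X : Phase n → Phase n) :
    matVec (fun y => diagonal fun t => l t y) X = fun y t => l t y * X y t := by
  funext y t
  simp [matVec, mulVec_diagonal]

variable {l} {x : Phase n}

lemma differentiableAt_matVec_diagonal (hl : ∀ s, DifferentiableAt ℝ (l s) x)
    {X : Phase n → Phase n} (hX : DifferentiableAt ℝ X x) :
    DifferentiableAt ℝ (fun y t => l t y * X y t) x :=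
  differentiableAt_pi.2 fun t => (hl t).mul (differentiableAt_pi.1 hX t)

lemma nijenhuisTorsionP_diagonal_apply (hl : ∀ s, DifferentiableAt ℝ (l s) x)
    {X Y : Phase n → Phase n} (hX : DifferentiableAt ℝ X x) (hY : DifferentiableAt ℝ Y x)
    (s : Fin n ⊕ Fin n) :
    nijenhuisTorsionP (fun y => diagonal fun t => l t y) X Y x s
      = (fderiv ℝ (l s) x (fun t => l t x * X x t) - l s x * fderiv ℝ (l s) x (X x)) * Y x s
        - (fderiv ℝ (l s) x (fun t => l t x * Y x t) - l s x * fderiv ℝ (l s) x (Y x))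
          * X x s := by
  have hLX := differentiableAt_matVec_diagonal hl hX
  have hLY := differentiableAt_matVec_diagonal hl hY
  simp only [nijenhuisTorsionP, lieBracketP, matVec_diagonal, Pi.add_apply, Pi.sub_apply,
    mulVec_diagonal]
  simp only [fderiv_apply_apply hX, fderiv_apply_apply hY, fderiv_apply_apply hLX,
    fderiv_apply_apply hLY]
  rw [fderiv_fun_mul (hl s) (differentiableAt_pi.1 hX s),
    fderiv_fun_mul (hl s) (differentiableAt_pi.1 hY s)]
  simp only [_root_.add_apply, _root_.smul_apply, smul_eq_mul]
  ring

lemma haantjesTensorP_diagonal (hl : ∀ s, DifferentiableAt ℝ (l s) x)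
    {X Y : Phase n → Phase n} (hX : DifferentiableAt ℝ X x) (hY : DifferentiableAt ℝ Y x) :
    haantjesTensorP (fun y => diagonal fun t => l t y) X Y x = 0 := by
  have hLX := differentiableAt_matVec_diagonal hl hX
  have hLY := differentiableAt_matVec_diagonal hl hY
  funext s
  simp only [haantjesTensorP, matVec_diagonal, Pi.add_apply, Pi.sub_apply, Pi.zero_apply,
    mulVec_diagonal, nijenhuisTorsionP_diagonal_apply hl hX hY,
    nijenhuisTorsionP_diagonal_apply hl hLX hLY, nijenhuisTorsionP_diagonal_apply hl hX hLY,
    nijenhuisTorsionP_diagonal_apply hl hLX hY]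
  ring

end DiagonalField

lemma diagonal_transpose_mul_symplJ {n : ℕ} (d : Fin n ⊕ Fin n → ℝ)
    (hd : ∀ i, d (Sum.inr i) = d (Sum.inl i)) :
    (diagonal d)ᵀ * symplJ n = symplJ n * diagonal d := by
  have hblocks :
      diagonal d = fromBlocks (diagonal (d ∘ Sum.inl)) 0 0 (diagonal (d ∘ Sum.inl)) := by
    rw [fromBlocks_diagonal]
    congr 1
    ext (i | i) <;> simp [hd]
  rw [hblocks, symplJ, fromBlocks_transpose, fromBlocks_multiply, fromBlocks_multiply]
  simp

def DependsOnlyOnActions {n : ℕ} (f : Phase n → ℝ) : Prop :=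
  ∀ y z : Phase n, (∀ i, y (Sum.inl i) = z (Sum.inl i)) → f y = f z

lemma DependsOnlyOnActions.fderiv_single_inr {n : ℕ} {f : Phase n → ℝ}
    (hf : DependsOnlyOnActions f) (x : Phase n) (i : Fin n) :
    fderiv ℝ f x (Pi.single (Sum.inr i) 1) = 0 :=
  fderiv_eq_zero_of_forall_add_smul_eq fun t => hf _ _ fun j => by simp

lemma actionAngleK_transpose_mulVec_grad {n : ℕ} [NeZero n] {H : Fin n → Phase n → ℝ}
    (hactions : ∀ α, DependsOnlyOnActions (H α)) {x : Phase n}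
    (hfreq : ∀ i, fderiv ℝ (H 0) x (Pi.single (Sum.inl i) 1) ≠ 0) (α : Fin n) :
    (actionAngleK H α x)ᵀ *ᵥ grad (H 0) x = grad (H α) x := by
  funext s
  rw [actionAngleK, diagonal_transpose, mulVec_diagonal]
  rcases s with i | i
  · exact div_mul_cancel₀ _ (hfreq i)
  · simp [grad, (hactions 0).fderiv_single_inr, (hactions α).fderiv_single_inr]

lemma haantjesTensorP_actionAngleK {n : ℕ} [NeZero n] {H : Fin n → Phase n → ℝ}
    {α : Fin n} {x : Phase n} (hα : ContDiffAt ℝ 2 (H α) x) (h0 : ContDiffAt ℝ 2 (H 0) x)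
    (hfreq : ∀ i, fderiv ℝ (H 0) x (Pi.single (Sum.inl i) 1) ≠ 0)
    {X Y : Phase n → Phase n} (hX : DifferentiableAt ℝ X x) (hY : DifferentiableAt ℝ Y x) :
    haantjesTensorP (actionAngleK H α) X Y x = 0 := by
  have hentries : ∀ s : Fin n ⊕ Fin n, DifferentiableAt ℝ (fun y =>
      fderiv ℝ (H α) y (Pi.single (Sum.inl (Sum.elim id id s)) 1) /
        fderiv ℝ (H 0) y (Pi.single (Sum.inl (Sum.elim id id s)) 1)) x := fun s => by
    simp only [div_eq_mul_inv]
    exact (differentiableAt_fderiv_apply hα _).mul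
      ((differentiableAt_fderiv_apply h0 _).fun_inv (hfreq _))
  exact haantjesTensorP_diagonal hentries hX hY

/-- Paper, Theorem 5.1, converse part: for a non-degenerate integrable
system `H = H₁, …, Hₙ` depending only on the action variables, with nowhere vanishing
frequencies, the diagonal operators `K_α` of (5.2): (1) are compatible with the canonical
symplectic structure; (2) pairwise commute; (3) have identically vanishing Haantjes tensor;
(4) satisfy the Lenard–Haantjes chain relations `K_αᵀ∇H = ∇H_{α+1}`; and (5) are pointwise
linearly independent whenever the differentials `dH₁,…,dHₙ` are. -/
theorem action_angle_haantjes_structure {n : ℕ} [NeZero n]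
    (U : Set (Phase n)) (hU : IsOpen U)
    (H : Fin n → Phase n → ℝ)
    (hHsmooth : ∀ α, ContDiffOn ℝ (⊤ : ℕ∞) (H α) U)
    (hactions : ∀ α (x y : Phase n), (∀ i, x (Sum.inl i) = y (Sum.inl i)) → H α x = H α y)
    (hfreq : ∀ x ∈ U, ∀ i, fderiv ℝ (H 0) x (Pi.single (Sum.inl i) 1) ≠ 0) :
    (∀ α, ∀ x ∈ U, (actionAngleK H α x)ᵀ * symplJ n = symplJ n * actionAngleK H α x) ∧
    (∀ α β, ∀ x ∈ U, actionAngleK H α x * actionAngleK H β x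
      = actionAngleK H β x * actionAngleK H α x) ∧
    (∀ α (X Y : Phase n → Phase n),
      ContDiffOn ℝ (⊤ : ℕ∞) X U → ContDiffOn ℝ (⊤ : ℕ∞) Y U →
      ∀ x ∈ U, haantjesTensorP (actionAngleK H α) X Y x = 0) ∧
    (∀ α, ∀ x ∈ U, (actionAngleK H α x)ᵀ *ᵥ grad (H 0) x = grad (H α) x) ∧
    (∀ x ∈ U, LinearIndependent ℝ (fun j => grad (H j) x) →
      LinearIndependent ℝ (fun α => actionAngleK H α x)) := by
  have chain α x (hx : x ∈ U) := actionAngleK_transpose_mulVec_grad hactions (hfreq x hx) α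
  refine ⟨fun α x _ => diagonal_transpose_mul_symplJ _ fun _ => rfl,
    fun α β x _ => (commute_diagonal _ _).eq, ?_, chain, fun x hx hind => ?_⟩
  · intro α X Y hX hY x hx
    have hx' := hU.mem_nhds hx
    have hH2 β : ContDiffAt ℝ 2 (H β) x := ((hHsmooth β).contDiffAt hx').of_le (by norm_cast)
    exact haantjesTensorP_actionAngleK (hH2 α) (hH2 0) (hfreq x hx)
      ((hX.contDiffAt hx').differentiableAt (by simp))
      ((hY.contDiffAt hx').differentiableAt (by simp))
  · refine linearIndependent_of_transpose_mulVec (grad (H 0) x) ?_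
    simpa only [chain _ x hx] using hind
end

section
/- Let φ₁, φ₂ : ℝ² → ℝ be differentiable functions satisfying the Cauchy–Riemann equations ∂φ₁/∂u = ∂φ₂/∂v and ∂φ₁/∂v = −∂φ₂/∂u (i.e. φ₁ + iφ₂ is holomorphic in u + iv), and similarly let ψ₁, ψ₂ : ℝ² → ℝ satisfy ∂ψ₁/∂x = ∂ψ₂/∂y and ∂ψ₁/∂y = −∂ψ₂/∂x. Define on ℝ⁴ (coordinates x, y, p_x, p_y) the Hamiltonians H₁(x,y,p_x,p_y) = φ₁(p_x,p_y) + ψ₁(x,y) and H₂(x,y,p_x,p_y) = φ₂(p_x,p_y) − ψ₂(x,y). Then {H₁, H₂} = 0 for the canonical Poisson bracket, so H₁ is a completely integrable Hamiltonian with first integral H₂. (Paper: Theorem 6.1 on integrable systems from analytic/harmonic functions, with the relative sign between φ₂ and ψ₂ fixed so that the stated involution holds; e.g. H₁ = p_x³ − 3p_xp_y² + x² − y² admits the integral H₂ = 3p_x²p_y − p_y³ − 2xy.) -/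
/-!
A Hamiltonian `T(p) + V(q)` that separates momenta from positions has bracket with another such
Hamiltonian made only of cross terms `∂V₁/∂q · ∂T₂/∂p − ∂T₁/∂p · ∂V₂/∂q`. For `H₁` and `H₂` the
Cauchy–Riemann equations for `φ` and for `ψ` turn each of these cross terms into one of the others,
and the four cancel in pairs.
-/

/-- Canonical Poisson bracket on `ℝ⁴` with coordinates `(x, y, p_x, p_y)`:
`{F,G} = ∂F/∂x·∂G/∂p_x + ∂F/∂y·∂G/∂p_y − ∂F/∂p_x·∂G/∂x − ∂F/∂p_y·∂G/∂y`. -/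
noncomputable def poisson4 (F G : ℝ × ℝ × ℝ × ℝ → ℝ) (z : ℝ × ℝ × ℝ × ℝ) : ℝ :=
  fderiv ℝ F z (1, 0, 0, 0) * fderiv ℝ G z (0, 0, 1, 0)
    + fderiv ℝ F z (0, 1, 0, 0) * fderiv ℝ G z (0, 0, 0, 1)
    - fderiv ℝ F z (0, 0, 1, 0) * fderiv ℝ G z (1, 0, 0, 0)
    - fderiv ℝ F z (0, 0, 0, 1) * fderiv ℝ G z (0, 1, 0, 0)

open ContinuousLinearMap

noncomputable def momentum : (ℝ × ℝ × ℝ × ℝ) →L[ℝ] ℝ × ℝ :=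
  (snd ℝ ℝ (ℝ × ℝ)).comp (snd ℝ ℝ (ℝ × ℝ × ℝ))

noncomputable def position : (ℝ × ℝ × ℝ × ℝ) →L[ℝ] ℝ × ℝ :=
  (fst ℝ ℝ (ℝ × ℝ × ℝ)).prod ((fst ℝ ℝ (ℝ × ℝ)).comp (snd ℝ ℝ (ℝ × ℝ × ℝ)))

@[simp]
theorem momentum_apply (w : ℝ × ℝ × ℝ × ℝ) : momentum w = (w.2.2.1, w.2.2.2) := rfl

@[simp]
theorem position_apply (w : ℝ × ℝ × ℝ × ℝ) : position w = (w.1, w.2.1) := rfl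

theorem fderiv_separable_apply {T V : ℝ × ℝ → ℝ} {z : ℝ × ℝ × ℝ × ℝ}
    (hT : DifferentiableAt ℝ T (momentum z)) (hV : DifferentiableAt ℝ V (position z))
    (v : ℝ × ℝ × ℝ × ℝ) :
    fderiv ℝ (fun w => T (w.2.2.1, w.2.2.2) + V (w.1, w.2.1)) z v
      = fderiv ℝ T (momentum z) (momentum v) + fderiv ℝ V (position z) (position v) := by
  have hH : HasFDerivAt (fun w => T (w.2.2.1, w.2.2.2) + V (w.1, w.2.1))
      ((fderiv ℝ T (momentum z)).comp momentum + (fderiv ℝ V (position z)).comp position) z :=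
    (hT.hasFDerivAt.comp z momentum.hasFDerivAt).add (hV.hasFDerivAt.comp z position.hasFDerivAt)
  rw [hH.fderiv]
  rfl

theorem poisson4_separable {T₁ V₁ T₂ V₂ : ℝ × ℝ → ℝ} {z : ℝ × ℝ × ℝ × ℝ}
    (hT₁ : DifferentiableAt ℝ T₁ (momentum z)) (hV₁ : DifferentiableAt ℝ V₁ (position z))
    (hT₂ : DifferentiableAt ℝ T₂ (momentum z)) (hV₂ : DifferentiableAt ℝ V₂ (position z)) :
    poisson4 (fun w => T₁ (w.2.2.1, w.2.2.2) + V₁ (w.1, w.2.1))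
        (fun w => T₂ (w.2.2.1, w.2.2.2) + V₂ (w.1, w.2.1)) z
      = fderiv ℝ V₁ (position z) (1, 0) * fderiv ℝ T₂ (momentum z) (1, 0)
        + fderiv ℝ V₁ (position z) (0, 1) * fderiv ℝ T₂ (momentum z) (0, 1)
        - fderiv ℝ T₁ (momentum z) (1, 0) * fderiv ℝ V₂ (position z) (1, 0)
        - fderiv ℝ T₁ (momentum z) (0, 1) * fderiv ℝ V₂ (position z) (0, 1) := by
  simp only [poisson4, fderiv_separable_apply hT₁ hV₁, fderiv_separable_apply hT₂ hV₂,
    momentum_apply, position_apply]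
  simp only [Prod.mk_zero_zero, map_zero, zero_add, add_zero]

/-- Paper, Theorem 6.1: if `φ₁ + iφ₂` and `ψ₁ + iψ₂` satisfy the
Cauchy–Riemann equations, then `H₁ = φ₁(p_x,p_y) + ψ₁(x,y)` and
`H₂ = φ₂(p_x,p_y) − ψ₂(x,y)` are in involution: `{H₁, H₂} = 0`, so `H₁` is a completely
integrable Hamiltonian with first integral `H₂`. -/
theorem integrable_from_holomorphic (φ₁ φ₂ ψ₁ ψ₂ : ℝ × ℝ → ℝ)
    (hφ₁ : Differentiable ℝ φ₁) (hφ₂ : Differentiable ℝ φ₂)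
    (hψ₁ : Differentiable ℝ ψ₁) (hψ₂ : Differentiable ℝ ψ₂)
    (hCRφu : ∀ z : ℝ × ℝ, fderiv ℝ φ₁ z (1, 0) = fderiv ℝ φ₂ z (0, 1))
    (hCRφv : ∀ z : ℝ × ℝ, fderiv ℝ φ₁ z (0, 1) = -fderiv ℝ φ₂ z (1, 0))
    (hCRψx : ∀ z : ℝ × ℝ, fderiv ℝ ψ₁ z (1, 0) = fderiv ℝ ψ₂ z (0, 1))
    (hCRψy : ∀ z : ℝ × ℝ, fderiv ℝ ψ₁ z (0, 1) = -fderiv ℝ ψ₂ z (1, 0)) :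
    ∀ z : ℝ × ℝ × ℝ × ℝ,
      poisson4 (fun w => φ₁ (w.2.2.1, w.2.2.2) + ψ₁ (w.1, w.2.1))
        (fun w => φ₂ (w.2.2.1, w.2.2.2) - ψ₂ (w.1, w.2.1)) z = 0 := by
  intro z
  have hH₂ : (fun w : ℝ × ℝ × ℝ × ℝ => φ₂ (w.2.2.1, w.2.2.2) - ψ₂ (w.1, w.2.1))
      = fun w => φ₂ (w.2.2.1, w.2.2.2) + (-ψ₂) (w.1, w.2.1) := by
    funext w
    simp only [Pi.neg_apply, sub_eq_add_neg]
  rw [hH₂, poisson4_separable (hφ₁ _) (hψ₁ _) (hφ₂ _) (hψ₂ _).neg, fderiv_neg]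
  simp only [neg_apply, hCRφu, hCRφv, hCRψx, hCRψy]
  ring
end

section
/- Let F, G, f, g : ℝ → ℝ be differentiable functions. Define on ℝ⁴ (coordinates x, y, p_x, p_y) the Hamiltonians H₁ = F(p_x − p_y) + G(p_x + p_y) + f(x − y) + g(x + y) and H₂ = −F(p_x − p_y) + G(p_x + p_y) − f(x − y) + g(x + y). Then {H₁, H₂} = 0 for the canonical Poisson bracket; hence H₁ defines a completely integrable system, separable in the characteristic coordinates ξ = (x+y)/√2, η = (x−y)/√2. (Paper: Theorem 6.3 on integrable systems from solutions of the wave equation; for F,G,f,g powers this includes the Sawada–Kotera system and new families of integrable systems.) -/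
/-!
Write `H₁ = A + B` and `H₂ = B - A` with `A = F(p_x - p_y) + f(x - y)` and
`B = G(p_x + p_y) + g(x + y)`. In the characteristic coordinates `x ± y`, `p_x ± p_y` the
functions `A` and `B` depend on disjoint, mutually commuting pairs of coordinates, so
`{A, B} = 0` and `{H₁, H₂} = 2 {A, B} = 0`. Concretely, both gradients are linear in the four
derivatives `F', G', f', g'`, and the bracket cancels identically.
-/

open ContinuousLinearMap

noncomputable def linForm4 (a b c d : ℝ) : (ℝ × ℝ × ℝ × ℝ) →L[ℝ] ℝ :=
  a • fst ℝ ℝ (ℝ × ℝ × ℝ)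
    + b • (fst ℝ ℝ (ℝ × ℝ)).comp (snd ℝ ℝ (ℝ × ℝ × ℝ))
    + c • ((fst ℝ ℝ ℝ).comp (snd ℝ ℝ (ℝ × ℝ))).comp (snd ℝ ℝ (ℝ × ℝ × ℝ))
    + d • ((snd ℝ ℝ ℝ).comp (snd ℝ ℝ (ℝ × ℝ))).comp (snd ℝ ℝ (ℝ × ℝ × ℝ))

@[simp]
lemma linForm4_apply (a b c d : ℝ) (w : ℝ × ℝ × ℝ × ℝ) :
    linForm4 a b c d w = a * w.1 + b * w.2.1 + c * w.2.2.1 + d * w.2.2.2 := by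
  simp [linForm4]

lemma poisson4_eq_of_hasFDerivAt {H₁ H₂ : ℝ × ℝ × ℝ × ℝ → ℝ} {z : ℝ × ℝ × ℝ × ℝ}
    {a₁ b₁ c₁ d₁ a₂ b₂ c₂ d₂ : ℝ}
    (h₁ : HasFDerivAt H₁ (linForm4 a₁ b₁ c₁ d₁) z)
    (h₂ : HasFDerivAt H₂ (linForm4 a₂ b₂ c₂ d₂) z) :
    poisson4 H₁ H₂ z = a₁ * c₂ + b₁ * d₂ - c₁ * a₂ - d₁ * b₂ := by
  simp [poisson4, h₁.fderiv, h₂.fderiv]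

noncomputable def waveHamiltonian (F G f g : ℝ → ℝ) (w : ℝ × ℝ × ℝ × ℝ) : ℝ :=
  F (w.2.2.1 - w.2.2.2) + G (w.2.2.1 + w.2.2.2) + f (w.1 - w.2.1) + g (w.1 + w.2.1)

lemma hasFDerivAt_comp_linForm4 {φ : ℝ → ℝ} {φ' a b c d : ℝ} {z : ℝ × ℝ × ℝ × ℝ}
    (hφ : HasDerivAt φ φ' (linForm4 a b c d z)) :
    HasFDerivAt (fun w => φ (linForm4 a b c d w))
      (linForm4 (φ' * a) (φ' * b) (φ' * c) (φ' * d)) z := by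
  refine (hφ.comp_hasFDerivAt z (linForm4 a b c d).hasFDerivAt).congr_fderiv ?_
  ext <;> simp

lemma hasFDerivAt_waveHamiltonian {F G f g : ℝ → ℝ} {F' G' f' g' : ℝ} {z : ℝ × ℝ × ℝ × ℝ}
    (hF : HasDerivAt F F' (z.2.2.1 - z.2.2.2)) (hG : HasDerivAt G G' (z.2.2.1 + z.2.2.2))
    (hf : HasDerivAt f f' (z.1 - z.2.1)) (hg : HasDerivAt g g' (z.1 + z.2.1)) :
    HasFDerivAt (waveHamiltonian F G f g) (linForm4 (f' + g') (g' - f') (F' + G') (G' - F')) z := by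
  have hF' := hasFDerivAt_comp_linForm4 (a := 0) (b := 0) (c := 1) (d := -1) (z := z)
    (by simpa [sub_eq_add_neg] using hF)
  have hG' := hasFDerivAt_comp_linForm4 (a := 0) (b := 0) (c := 1) (d := 1) (z := z)
    (by simpa using hG)
  have hf' := hasFDerivAt_comp_linForm4 (a := 1) (b := -1) (c := 0) (d := 0) (z := z)
    (by simpa [sub_eq_add_neg] using hf)
  have hg' := hasFDerivAt_comp_linForm4 (a := 1) (b := 1) (c := 0) (d := 0) (z := z)
    (by simpa using hg)
  refine (((hF'.add hG').add hf').add hg').congr_of_eventuallyEq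
    (.of_forall fun w => ?_) |>.congr_fderiv ?_
  · simp [waveHamiltonian, sub_eq_add_neg]
  · ext <;> simp <;> ring

/-- Paper, Theorem 6.3, integrable systems from the wave equation:
for differentiable `F, G, f, g : ℝ → ℝ`, the Hamiltonians
`H₁ = F(p_x−p_y) + G(p_x+p_y) + f(x−y) + g(x+y)` and
`H₂ = −F(p_x−p_y) + G(p_x+p_y) − f(x−y) + g(x+y)` are in involution `{H₁,H₂} = 0`,
so `H₁` defines a completely integrable system. -/
theorem integrable_from_wave_equation (F G f g : ℝ → ℝ)
    (hF : Differentiable ℝ F) (hG : Differentiable ℝ G)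
    (hf : Differentiable ℝ f) (hg : Differentiable ℝ g) :
    ∀ z : ℝ × ℝ × ℝ × ℝ,
      poisson4
        (fun w => F (w.2.2.1 - w.2.2.2) + G (w.2.2.1 + w.2.2.2)
          + f (w.1 - w.2.1) + g (w.1 + w.2.1))
        (fun w => -F (w.2.2.1 - w.2.2.2) + G (w.2.2.1 + w.2.2.2)
          - f (w.1 - w.2.1) + g (w.1 + w.2.1)) z = 0 := by
  intro z
  have h₁ : HasFDerivAt (waveHamiltonian F G f g) _ z :=
    hasFDerivAt_waveHamiltonian (hF _).hasDerivAt (hG _).hasDerivAt (hf _).hasDerivAt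
      (hg _).hasDerivAt
  have h₂ : HasFDerivAt (waveHamiltonian (fun t => -F t) G (fun t => -f t) g) _ z :=
    hasFDerivAt_waveHamiltonian (hF _).hasDerivAt.neg (hG _).hasDerivAt (hf _).hasDerivAt.neg
      (hg _).hasDerivAt
  have hH₂ : waveHamiltonian (fun t => -F t) G (fun t => -f t) g
      = fun w => -F (w.2.2.1 - w.2.2.2) + G (w.2.2.1 + w.2.2.2)
          - f (w.1 - w.2.1) + g (w.1 + w.2.1) := by
    funext w; simp only [waveHamiltonian]; ring
  rw [hH₂] at h₂
  exact (poisson4_eq_of_hasFDerivAt h₁ h₂).trans (by ring)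
end
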